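/- arXiv:2406.04211 — 8 statements merged into one kernel-verified Lean document; each statement's English description precedes it below -/
import Mathlib

section
/- The number of Stirling permutations of the multiset {1,1,2,2,...,n,n} in which the two copies of 1 are adjacent equals 2^{n-1}·(n-1)! for all n ≥ 1. -/
/-- A Stirling permutation of the multiset {1,1,2,2,...,n,n}, encoded as a list:
each `m ∈ [1,n]` appears exactly twice, and whenever two equal entries appear,
all entries strictly between them are strictly larger. -/
def IsStirling (n : ℕ) (σ : List ℕ) : Prop :=
  (∀ m : ℕ, σ.count m = if 1 ≤ m ∧ m ≤ n then 2 else 0) ∧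
  (∀ i s j : ℕ, i < s → s < j → j < σ.length →
    σ.getD i 0 = σ.getD j 0 → σ.getD i 0 < σ.getD s 0)

/-- The two copies of `1` occupy consecutive positions. -/
def OneAdjacent (σ : List ℕ) : Prop :=
  ∃ i : ℕ, i + 1 < σ.length ∧ σ.getD i 0 = 1 ∧ σ.getD (i+1) 0 = 1

/-!
Removing the two copies of the largest letter `n + 1` from a Stirling permutation of order
`n + 1` leaves a Stirling permutation of order `n`: the two copies are adjacent, since anything
between them would have to exceed `n + 1`. Conversely, inserting the block `(n+1)(n+1)` into any
of the `2n + 1` gaps of a Stirling permutation of order `n` gives one of order `n + 1`. The two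
`1`s stay adjacent exactly when the block does not go into the gap between them, which leaves
`2n` admissible gaps. Hence the count `c n` satisfies `c 1 = 1` and `c (n + 1) = 2n · c n`.
-/

open List

namespace List

variable {α : Type*}

def insertPair (v : α) (p : ℕ) (l : List α) : List α := l.take p ++ v :: v :: l.drop p

theorem insertPair_append_length (v : α) (s t : List α) :
    insertPair v s.length (s ++ t) = s ++ v :: v :: t := by
  simp [insertPair]

theorem perm_insertPair (v : α) (p : ℕ) (l : List α) : insertPair v p l ~ v :: v :: l := by
  conv_rhs => rw [← take_append_drop p l]
  exact perm_middle.trans (perm_middle.cons v)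

theorem sublist_insertPair (v : α) (p : ℕ) (l : List α) : l <+ insertPair v p l := by
  conv_lhs => rw [← take_append_drop p l]
  exact ((sublist_cons_self v _).trans (sublist_cons_self v _)).append_left _

theorem filter_insertPair [DecidableEq α] {v : α} {l : List α} (hv : v ∉ l) (p : ℕ) :
    (insertPair v p l).filter (· ≠ v) = l := by
  have hl : l.filter (· ≠ v) = l :=
    filter_eq_self.2 fun a ha => by simpa using ne_of_mem_of_not_mem ha hv
  rw [insertPair, filter_append, filter_cons_of_neg (by simp), filter_cons_of_neg (by simp),
    ← filter_append, take_append_drop, hl]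

theorem idxOf_insertPair [DecidableEq α] {v : α} {l : List α} (hv : v ∉ l) {p : ℕ}
    (hp : p ≤ l.length) : (insertPair v p l).idxOf v = p := by
  have hvp : v ∉ l.take p := fun h => hv (mem_of_mem_take h)
  simp [insertPair, idxOf_append, hvp, hp]

theorem insertPair_injOn [DecidableEq α] (v : α) :
    Set.InjOn (fun q : List α × ℕ => insertPair v q.2 q.1) {q | v ∉ q.1 ∧ q.2 ≤ q.1.length} := by
  rintro ⟨l, p⟩ ⟨hl, hp⟩ ⟨l', p'⟩ ⟨hl', hp'⟩ h
  dsimp only at hl hp hl' hp' h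
  refine Prod.ext ?_ ?_
  · rw [← filter_insertPair hl p, h, filter_insertPair hl' p']
  · rw [← idxOf_insertPair hl hp, h, idxOf_insertPair hl' hp']

theorem infix_insertPair {s u t : List α} (v : α) {p : ℕ}
    (hp : p ≤ s.length ∨ s.length + u.length ≤ p) : u <:+: insertPair v p (s ++ u ++ t) := by
  rcases hp with hp | hp
  · rw [insertPair, append_assoc, take_append_of_le_length hp, drop_append_of_le_length hp]
    simpa using infix_append (s.take p ++ v :: v :: s.drop p) u t
  · have hsu : (s ++ u).length ≤ p := by simpa using hp
    rw [insertPair, take_append, drop_append, take_of_length_le hsu, drop_eq_nil_of_le hsu,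
      append_assoc (s ++ u)]
    exact infix_append s u _

theorem infix_of_infix_insertPair [DecidableEq α] {u l : List α} {v : α} {p : ℕ}
    (hvl : v ∉ l) (hvu : v ∉ u) (h : u <:+: insertPair v p l) : u <:+: l := by
  have hu : u.filter (· ≠ v) = u :=
    filter_eq_self.2 fun a ha => by simpa using ne_of_mem_of_not_mem ha hvu
  have := h.filter (· ≠ v)
  rwa [hu, filter_insertPair hvl] at this

theorem append_cons_inj_of_notMem_left [DecidableEq α] {x₁ x₂ z₁ z₂ : List α} {a : α}
    (h₁ : a ∉ x₁) (h₂ : a ∉ x₂) (h : x₁ ++ a :: z₁ = x₂ ++ a :: z₂) : x₁ = x₂ ∧ z₁ = z₂ := by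
  have hlen : x₁.length = x₂.length := by
    simpa [idxOf_append, h₁, h₂] using congrArg (idxOf a) h
  obtain ⟨hx, hz⟩ := append_inj h hlen
  exact ⟨hx, (cons.inj hz).2⟩

theorem infix_insertPair_iff [DecidableEq α] {E F : List α} {a v : α} (hE : a ∉ E) (hF : a ∉ F)
    (hva : v ≠ a) {p : ℕ} : [a, a] <:+: insertPair v p (E ++ a :: a :: F) ↔ p ≠ E.length + 1 := by
  refine ⟨?_, fun hp => by simpa using infix_insertPair v (s := E) (u := [a, a]) (t := F) (by
    rw [length_cons, length_singleton]; omega)⟩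
  rintro ⟨s, t, h⟩ rfl
  have hins : insertPair v (E.length + 1) (E ++ a :: a :: F) = E ++ a :: (v :: v :: a :: F) := by
    simpa using insertPair_append_length v (E ++ [a]) (a :: F)
  rw [hins, append_assoc] at h
  have hs : a ∉ s := by
    have hcount := congrArg (count a) h
    simp only [count_append, count_cons_self, count_cons_of_ne hva, count_eq_zero.2 hE,
      count_eq_zero.2 hF] at hcount
    exact count_eq_zero.1 (by omega)
  obtain ⟨-, ht⟩ := append_cons_inj_of_notMem_left hs hE h
  exact hva (cons.inj ht).1.symm

end List

section StirlingCondition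

variable {α : Type*}

def StirlingCondition [LT α] (l : List α) : Prop := ∀ m x, [m, x, m] <+ l → m < x

theorem stirlingCondition_iff_getD [LT α] (l : List α) (d : α) :
    StirlingCondition l ↔ ∀ i s j, i < s → s < j → j < l.length →
      l.getD i d = l.getD j d → l.getD i d < l.getD s d := by
  constructor
  · intro h i s j his hsj hj hij
    have hi : i < l.length := by omega
    have hs : s < l.length := by omega
    rw [getD_eq_getElem _ _ hi, getD_eq_getElem _ _ hj] at hij
    rw [getD_eq_getElem _ _ hi, getD_eq_getElem _ _ hs]
    refine h _ _ ?_
    simpa [hij] using map_getElem_sublist (is := [⟨i, hi⟩, ⟨s, hs⟩, ⟨j, hj⟩])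
      (by
        simp only [pairwise_cons, mem_cons, not_mem_nil, or_false, forall_eq_or_imp, forall_eq,
          Fin.mk_lt_mk, IsEmpty.forall_iff, implies_true, Pairwise.nil, and_true]
        omega)
  · intro h m x hsub
    obtain ⟨is, his, hlt⟩ := sublist_eq_map_getElem hsub
    obtain ⟨i, s, j, rfl⟩ := length_eq_three.1 (by simpa using (congrArg length his).symm)
    simp only [map_cons, map_nil, cons.injEq, Fin.getElem_fin, and_true] at his
    obtain ⟨rfl, rfl, hj⟩ := his
    rw [pairwise_cons, pairwise_cons] at hlt
    have his : i < s := hlt.1 s (by simp)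
    have hsj : s < j := hlt.2.1 j (by simp)
    simpa [getD_eq_getElem] using h i s j his hsj j.2 (by simp [hj])

theorem stirlingCondition_insertPair_iff [LinearOrder α] {l : List α} {v : α} {p : ℕ}
    (hv : ∀ x ∈ l, x < v) : StirlingCondition (insertPair v p l) ↔ StirlingCondition l := by
  refine ⟨fun h m x hmx => h m x (hmx.trans (sublist_insertPair v p l)), fun h m x hmx => ?_⟩
  have hvl : v ∉ l := fun h => (hv v h).false
  by_cases hmv : m = v
  · -- the only two copies of `v` are adjacent, so nothing fits between them
    subst hmv
    exfalso
    obtain ⟨l₁, l₂, he, h₁, h₂⟩ := sublist_append_iff.1 hmx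
    rcases l₁ with _ | ⟨a, l₁⟩
    · rw [nil_append] at he
      subst he
      exact hvl (mem_of_mem_drop (by simpa using h₂.drop 2))
    · rw [cons_append, cons.injEq] at he
      exact hvl (mem_of_mem_take (h₁.subset (he.1 ▸ mem_cons_self)))
  have hm : m ∈ l := by
    simpa [hmv] using (perm_insertPair v p l).subset (hmx.subset mem_cons_self)
  by_cases hxv : x = v
  · exact hxv ▸ hv m hm
  · have hmx' := hmx.filter (· ≠ v)
    rw [filter_insertPair hvl] at hmx'
    exact h m x (by simpa [hmv, hxv] using hmx')

theorem StirlingCondition.eq_nil_of_forall_le [Preorder α] {X Z Y : List α} {v : α}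
    (h : StirlingCondition (X ++ v :: (Z ++ v :: Y))) (hZ : ∀ z ∈ Z, z ≤ v) : Z = [] := by
  refine eq_nil_iff_forall_not_mem.2 fun z hz => (hZ z hz).not_gt (h v z ?_)
  exact (((singleton_sublist.2 hz).append (singleton_sublist.2 mem_cons_self)).cons_cons
    v).trans (sublist_append_right X _)

end StirlingCondition

theorem bijOn_prod_of_forall_bijOn {α β γ : Type*} {s : Set α} {t : Set β} {u : α → Set γ}
    {f : α → β → γ} (h : ∀ a ∈ s, Set.BijOn (f a) t (u a)) :
    Set.BijOn (fun q : α × β => (q.1, f q.1 q.2)) (s ×ˢ t) {q | q.1 ∈ s ∧ q.2 ∈ u q.1} := by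
  refine ⟨fun q hq => ⟨hq.1, (h _ hq.1).mapsTo hq.2⟩, ?_, fun q hq => ?_⟩
  · rintro ⟨a, b⟩ ⟨ha, hb⟩ ⟨a', b'⟩ ⟨-, hb'⟩ he
    obtain ⟨rfl, he⟩ := Prod.mk.inj he
    exact congrArg _ ((h a ha).injOn hb hb' he)
  · obtain ⟨b, hb, hfb⟩ := (h _ hq.1).surjOn hq.2
    exact ⟨(q.1, b), ⟨hq.1, hb⟩, Prod.ext rfl hfb⟩

def succAboveNat (p k : ℕ) : ℕ := if k < p then k else k + 1

theorem bijOn_succAboveNat {p N : ℕ} (hp : p ≤ N) :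
    Set.BijOn (succAboveNat p) (Set.Iio N) {q | q ≤ N ∧ q ≠ p} := by
  refine ⟨fun k (hk : k < N) => ?_, fun k _ k' _ h => ?_, fun q ⟨hq, hqp⟩ => ?_⟩
  · unfold succAboveNat
    split_ifs <;> constructor <;> omega
  · unfold succAboveNat at h
    split_ifs at h <;> omega
  · refine ⟨if q < p then q else q - 1, ?_, ?_⟩
    · simp only [Set.mem_Iio]
      split_ifs <;> omega
    · unfold succAboveNat
      split_ifs <;> omega

theorem isStirling_iff_perm {n : ℕ} {σ : List ℕ} :
    IsStirling n σ ↔ σ ~ range' 1 n ++ range' 1 n ∧ StirlingCondition σ := by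
  rw [IsStirling, stirlingCondition_iff_getD σ 0, perm_iff_count]
  refine and_congr_left' (forall_congr' fun m => ?_)
  simp only [count_append, (nodup_range' (s := 1) (n := n)).count, mem_range'_1]
  split_ifs <;> omega

namespace IsStirling

variable {n : ℕ} {σ : List ℕ}

theorem length_eq (h : IsStirling n σ) : σ.length = 2 * n := by
  rw [(isStirling_iff_perm.1 h).1.length_eq, length_append, length_range']
  omega

theorem mem_iff (h : IsStirling n σ) {x : ℕ} : x ∈ σ ↔ 1 ≤ x ∧ x ≤ n := by
  rw [(isStirling_iff_perm.1 h).1.mem_iff, mem_append, or_self, mem_range'_1]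
  omega

theorem exists_eq_insertPair (h : IsStirling (n + 1) σ) :
    ∃ l p, p ≤ l.length ∧ insertPair (n + 1) p l = σ := by
  have hsub : [n + 1, n + 1] <+ σ := (replicate_sublist_iff (n := 2)).2 (by simp [h.1])
  obtain ⟨r₁, r₂, rfl, h₁, h₂⟩ := cons_sublist_iff.1 hsub
  obtain ⟨X, W, rfl⟩ := append_of_mem h₁
  obtain ⟨W', Y, rfl⟩ := append_of_mem (singleton_sublist.1 h₂)
  have hW : W ++ W' = [] := by
    refine StirlingCondition.eq_nil_of_forall_le (X := X) (v := n + 1) (Y := Y) ?_ fun z hz => ?_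
    · simpa using (isStirling_iff_perm.1 h).2
    · refine (h.mem_iff.1 ?_).2
      simp only [mem_append, mem_cons] at hz ⊢
      tauto
  obtain ⟨rfl, rfl⟩ := append_eq_nil_iff.1 hW
  exact ⟨X ++ Y, X.length, by simp, by simpa using insertPair_append_length (n + 1) X Y⟩

end IsStirling

theorem isStirling_insertPair_iff {n p : ℕ} {σ : List ℕ} :
    IsStirling (n + 1) (insertPair (n + 1) p σ) ↔ IsStirling n σ := by
  have hL : range' 1 (n + 1) ++ range' 1 (n + 1) ~
      (n + 1) :: (n + 1) :: (range' 1 n ++ range' 1 n) := by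
    rw [range'_1_concat, add_comm 1 n, append_assoc]
    refine perm_middle.trans (Perm.cons _ ?_)
    simpa using perm_append_singleton (n + 1) (range' 1 n ++ range' 1 n)
  have hv (h : σ ~ range' 1 n ++ range' 1 n) : ∀ x ∈ σ, x < n + 1 := fun x hx => by
    have hx' := h.subset hx
    rw [mem_append, or_self, mem_range'_1] at hx'
    omega
  rw [isStirling_iff_perm, isStirling_iff_perm, (perm_insertPair _ p σ).congr_left,
    hL.congr_right, perm_cons, perm_cons]
  exact and_congr_right fun h => stirlingCondition_insertPair_iff (hv h)

theorem oneAdjacent_iff_infix {σ : List ℕ} : OneAdjacent σ ↔ [1, 1] <:+: σ := by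
  rw [infix_iff_getElem?]
  constructor
  · rintro ⟨i, hi, h₀, h₁⟩
    rw [getD_eq_getElem _ _ (by omega)] at h₀ h₁
    refine ⟨i, by rw [length_cons, length_singleton]; omega, fun j hj => ?_⟩
    obtain rfl | rfl : j = 0 ∨ j = 1 := by rw [length_cons, length_singleton] at hj; omega
    · simp [getElem?_eq_getElem (by omega : i < σ.length), h₀]
    · simp [getElem?_eq_getElem hi, add_comm, h₁]
  · rintro ⟨k, hk, h⟩
    have h₀ := h 0 (by simp)
    have h₁ := h 1 (by simp)
    rw [length_cons, length_singleton] at hk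
    refine ⟨k, by omega, ?_, ?_⟩ <;> simp_all [getD_eq_getElem?_getD, add_comm]

def stirlingOneAdj (n : ℕ) : Set (List ℕ) := {σ | IsStirling n σ ∧ OneAdjacent σ}

theorem oneAdjacent_insertPair_iff {n p : ℕ} {σ : List ℕ} (hσ : σ ∈ stirlingOneAdj n) :
    OneAdjacent (insertPair (n + 1) p σ) ↔ p ≠ σ.idxOf 1 + 1 := by
  obtain ⟨hst, hadj⟩ := hσ
  obtain ⟨E, F, rfl⟩ := oneAdjacent_iff_infix.1 hadj
  have hn : 1 ≤ n := (hst.mem_iff.1 (by simp)).2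
  have hcount := hst.1 1
  simp only [if_pos (And.intro le_rfl hn), count_append, count_cons_self] at hcount
  have hE : 1 ∉ E := count_eq_zero.1 (by omega)
  have hF : 1 ∉ F := count_eq_zero.1 (by omega)
  rw [oneAdjacent_iff_infix, show E ++ [1, 1] ++ F = E ++ 1 :: 1 :: F by simp,
    infix_insertPair_iff hE hF (by omega)]
  simp [idxOf_append, hE]

/-- `(σ, p)` stands for inserting `(n+1)(n+1)` before position `p` of `σ`;
`σ.idxOf 1 + 1` is the gap between the two `1`s. -/
def admissibleInsertions (n : ℕ) : Set (List ℕ × ℕ) :=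
  {q | q.1 ∈ stirlingOneAdj n ∧ q.2 ≤ 2 * n ∧ q.2 ≠ q.1.idxOf 1 + 1}

theorem bijOn_insertPair {n : ℕ} (hn : 1 ≤ n) :
    Set.BijOn (fun q : List ℕ × ℕ => insertPair (n + 1) q.2 q.1) (admissibleInsertions n)
      (stirlingOneAdj (n + 1)) := by
  refine ⟨?_, ?_, ?_⟩
  · rintro ⟨σ, p⟩ ⟨hσ, -, hp⟩
    exact ⟨isStirling_insertPair_iff.2 hσ.1, (oneAdjacent_insertPair_iff hσ).2 hp⟩
  · refine (insertPair_injOn (n + 1)).mono ?_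
    rintro ⟨σ, p⟩ ⟨hσ, hp, -⟩
    exact ⟨fun h => by have := (hσ.1.mem_iff.1 h).2; omega, hσ.1.length_eq ▸ hp⟩
  · rintro τ ⟨hτ, hadj⟩
    obtain ⟨σ, p, hp, rfl⟩ := hτ.exists_eq_insertPair
    have hσ : IsStirling n σ := isStirling_insertPair_iff.1 hτ
    have hv : n + 1 ∉ σ := fun h => by have := (hσ.mem_iff.1 h).2; omega
    have hσ' : σ ∈ stirlingOneAdj n := ⟨hσ, oneAdjacent_iff_infix.2
      (infix_of_infix_insertPair hv (by rw [mem_cons, mem_singleton]; omega)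
        (oneAdjacent_iff_infix.1 hadj))⟩
    exact ⟨(σ, p), ⟨hσ', hσ.length_eq ▸ hp, (oneAdjacent_insertPair_iff hσ').1 hadj⟩, rfl⟩

theorem ncard_stirlingOneAdj_succ {n : ℕ} (hn : 1 ≤ n) :
    (stirlingOneAdj (n + 1)).ncard = 2 * n * (stirlingOneAdj n).ncard := by
  have hfib : ∀ σ ∈ stirlingOneAdj n, Set.BijOn (succAboveNat (σ.idxOf 1 + 1)) (Set.Iio (2 * n))
      {p | p ≤ 2 * n ∧ p ≠ σ.idxOf 1 + 1} := fun σ hσ => by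
    refine bijOn_succAboveNat ?_
    have h1 : 1 ∈ σ := (oneAdjacent_iff_infix.1 hσ.2).subset mem_cons_self
    have := idxOf_lt_length_of_mem h1
    have := hσ.1.length_eq
    omega
  rw [← ((bijOn_insertPair hn).comp (bijOn_prod_of_forall_bijOn hfib)).ncard_eq, Set.ncard_prod,
    Set.ncard_Iio_nat, mul_comm]

theorem stirlingOneAdj_one : stirlingOneAdj 1 = {[1, 1]} := by
  ext σ
  simp only [stirlingOneAdj, Set.mem_ofPred_eq, Set.mem_singleton_iff, isStirling_iff_perm]
  constructor
  · rintro ⟨⟨hperm, -⟩, -⟩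
    exact (perm_replicate (n := 2)).1 hperm
  · rintro rfl
    exact ⟨⟨Perm.refl _, fun m x h => absurd h.length_le (by simp)⟩,
      oneAdjacent_iff_infix.2 (infix_refl _)⟩

theorem stirling_one_adjacent_count (n : ℕ) (hn : 1 ≤ n) :
    Set.ncard {σ : List ℕ | IsStirling n σ ∧ OneAdjacent σ} =
      2 ^ (n - 1) * (n - 1).factorial := by
  change (stirlingOneAdj n).ncard = _
  induction n, hn using Nat.le_induction with
  | base => simp [stirlingOneAdj_one]
  | succ n hn ih =>
    obtain ⟨m, rfl⟩ := Nat.exists_eq_add_of_le' hn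
    rw [ncard_stirlingOneAdj_succ hn, ih, Nat.add_sub_cancel, Nat.add_sub_cancel, pow_succ,
      Nat.factorial_succ]
    ring
end

section
/- For every n ≥ 1, summing x^{des_A(π)} over all signed permutations π in the hyperoctahedral group S_n^B gives 2^n · A_n(x), where A_n(x) is the type A Eulerian polynomial (the generating polynomial of descents over the symmetric group S_n). -/
/-- A signed permutation of `{1,…,n}`, encoded by an underlying permutation together
with a sign for each position. -/
abbrev SignedPerm (n : ℕ) := Equiv.Perm (Fin n) × (Fin n → Bool)

/-- The entry `π(i)` of a signed permutation (1-based, `1 ≤ i ≤ n`), as an integer;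
by convention `π(0) = 0` and entries out of range are `0`. -/
def sEnt (n : ℕ) (π : SignedPerm n) (i : ℕ) : ℤ :=
  if h : 1 ≤ i ∧ i ≤ n then
    (if π.2 ⟨i - 1, by omega⟩ then -(((π.1 ⟨i - 1, by omega⟩ : ℕ) : ℤ) + 1)
     else ((π.1 ⟨i - 1, by omega⟩ : ℕ) : ℤ) + 1)
  else 0

/-- Type `A` descents: `#{1 ≤ i ≤ n-1 : π(i) > π(i+1)}`. -/
def desA (n : ℕ) (π : SignedPerm n) : ℕ :=
  ((Finset.Icc 1 (n - 1)).filter fun i => sEnt n π (i + 1) < sEnt n π i).card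

/-- Type `B` descents: `#{0 ≤ i ≤ n-1 : π(i) > π(i+1)}`, with `π(0) = 0`. -/
def desB (n : ℕ) (π : SignedPerm n) : ℕ :=
  ((Finset.range n).filter fun i => sEnt n π (i + 1) < sEnt n π i).card

/-- Number of negative entries of a signed permutation. -/
def negS (n : ℕ) (π : SignedPerm n) : ℕ :=
  (Finset.univ.filter fun i : Fin n => π.2 i = true).card

/-- The entry `σ(i)` of an ordinary permutation (1-based, values in `{1,…,n}`),
with out-of-range convention `0`. -/
def pEnt (n : ℕ) (σ : Equiv.Perm (Fin n)) (i : ℕ) : ℕ :=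
  if h : 1 ≤ i ∧ i ≤ n then (σ ⟨i - 1, by omega⟩ : ℕ) + 1 else 0

/-- Number of descents of an ordinary permutation. -/
def desP (n : ℕ) (σ : Equiv.Perm (Fin n)) : ℕ :=
  ((Finset.Icc 1 (n - 1)).filter fun i => pEnt n σ (i + 1) < pEnt n σ i).card

/-!
Record a signed permutation by the signs `ε` it attaches to the values `1, …, n` together with
its underlying permutation `τ`. For fixed `ε` the word of `π` is `j ↦ v (τ j)`, where
`v k = ±(k + 1)` with sign `ε k`; since `v` is injective, `v = g ∘ ρ⁻¹` for an increasing `g`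
and a permutation `ρ` sorting `v`. Hence the word of `π` has the same relative order, and so
the same type `A` descents, as the permutation `ρ⁻¹ τ`, and `τ ↦ ρ⁻¹ τ` is a bijection of
`S_n`. Each of the `2 ^ n` sign vectors thus contributes `A_n(x)`.
-/

namespace SignedPerm

variable {n : ℕ}

def signedVal (ε : Fin n → Bool) (k : Fin n) : ℤ :=
  if ε k then -((k : ℤ) + 1) else (k : ℤ) + 1

lemma signedVal_injective (ε : Fin n → Bool) : Function.Injective (signedVal ε) := by
  intro a b h
  unfold signedVal at h
  split_ifs at h <;> omega

def signSort (ε : Fin n → Bool) : Equiv.Perm (Fin n) := Tuple.sort (signedVal ε)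

lemma strictMono_signedVal_comp_signSort (ε : Fin n → Bool) :
    StrictMono (signedVal ε ∘ signSort ε) :=
  (Tuple.monotone_sort _).strictMono_of_injective
    ((signedVal_injective ε).comp (signSort ε).injective)

lemma sEnt_eq_signedVal (τ : Equiv.Perm (Fin n)) (ε : Fin n → Bool) {i : ℕ}
    (hi : 1 ≤ i ∧ i ≤ n) : sEnt n (τ, ε ∘ τ) i = signedVal ε (τ ⟨i - 1, by omega⟩) := by
  rw [sEnt, dif_pos hi]
  rfl

lemma pEnt_eq (σ : Equiv.Perm (Fin n)) {i : ℕ} (hi : 1 ≤ i ∧ i ≤ n) :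
    pEnt n σ i = (σ ⟨i - 1, by omega⟩ : ℕ) + 1 := by
  rw [pEnt, dif_pos hi]

lemma desA_signSort_mul (ε : Fin n → Bool) (σ : Equiv.Perm (Fin n)) :
    desA n (signSort ε * σ, ε ∘ ⇑(signSort ε * σ)) = desP n σ := by
  unfold desA desP
  congr 1
  refine Finset.filter_congr fun i hi => ?_
  obtain ⟨hi₁, hi₂⟩ := Finset.mem_Icc.mp hi
  rw [sEnt_eq_signedVal _ _ ⟨hi₁, by omega⟩, sEnt_eq_signedVal _ _ ⟨by omega, by omega⟩,
    pEnt_eq _ ⟨hi₁, by omega⟩, pEnt_eq _ ⟨by omega, by omega⟩, Equiv.Perm.mul_apply,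
    Equiv.Perm.mul_apply]
  change (signedVal ε ∘ signSort ε) _ < (signedVal ε ∘ signSort ε) _ ↔ _
  rw [(strictMono_signedVal_comp_signSort ε).lt_iff_lt, Fin.lt_def]
  omega

lemma sum_desA_signs_eq {M : Type*} [AddCommMonoid M] (f : ℕ → M) (ε : Fin n → Bool) :
    ∑ τ : Equiv.Perm (Fin n), f (desA n (τ, ε ∘ τ)) = ∑ σ : Equiv.Perm (Fin n), f (desP n σ) := by
  rw [← Equiv.sum_comp (Equiv.mulLeft (signSort ε))]
  exact Finset.sum_congr rfl fun σ _ => congrArg f (desA_signSort_mul ε σ)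

lemma sum_eq_sum_signs_perm {M : Type*} [AddCommMonoid M] (F : SignedPerm n → M) :
    ∑ π, F π = ∑ ε : Fin n → Bool, ∑ τ : Equiv.Perm (Fin n), F (τ, ε ∘ τ) := by
  rw [Finset.sum_comm, Fintype.sum_prod_type]
  refine Finset.sum_congr rfl fun τ _ => ?_
  exact (Equiv.sum_comp (τ.arrowCongr (Equiv.refl Bool)).symm _).symm

end SignedPerm

theorem desA_sum_eq_general (n : ℕ) (x : ℚ) :
    ∑ π : SignedPerm n, x ^ desA n π =
      2 ^ n * ∑ σ : Equiv.Perm (Fin n), x ^ desP n σ := by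
  rw [SignedPerm.sum_eq_sum_signs_perm]
  simp_rw [SignedPerm.sum_desA_signs_eq (x ^ ·)]
  rw [Finset.sum_const, Finset.card_univ, Fintype.card_fun, Fintype.card_bool,
    Fintype.card_fin, nsmul_eq_mul, Nat.cast_pow, Nat.cast_ofNat]

theorem desA_sum_eq (n : ℕ) (hn : 1 ≤ n) (x : ℚ) :
    ∑ π : SignedPerm n, x ^ desA n π =
      2 ^ n * ∑ σ : Equiv.Perm (Fin n), x ^ desP n σ :=
  desA_sum_eq_general n x
end

section
/- Define double sequences ξ(n,k) and ζ(n,k) by ξ(1,0)=1, ξ(1,k)=0 for k≠0, ζ(1,k)=0 for all k, and ξ(n+1,k) = (1+2k)ξ(n,k) + (n-2k+1)ξ(n,k-1) + (1/2)ζ(n,k-1), ζ(n+1,k) = 2(1+k)ζ(n,k) + (n-2k)ζ(n,k-1) + 2ξ(n,k). Then all ξ(n,k) and ζ(n,k) are nonnegative integers. -/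
/-!
Induct on `n` with a stronger invariant: every `ξ n k` is a natural number, every `ζ n k` is
twice one, and the rows are supported on `0 ≤ 2k < n` and `0 ≤ 2k + 1 < n` respectively. The
support bounds make every coefficient of the recurrence that multiplies a nonzero entry
nonnegative, while the recurrence for `ξ` only ever sees `ζ / 2`.
-/

theorem intCast_mul_mem_bot {R : Type*} [Ring R] {c : ℤ} {y : R}
    (hy : y ∈ (⊥ : Subsemiring R)) (h : c < 0 → y = 0) : (c : R) * y ∈ (⊥ : Subsemiring R) := by
  rcases lt_or_ge c 0 with hc | hc
  · rw [h hc, mul_zero]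
    exact zero_mem _
  · lift c to ℕ using hc
    rw [Int.cast_natCast]
    exact mul_mem (natCast_mem _ c) hy

namespace XiZeta

/-- The row `ξ (n + 1)` in terms of the rows `x = ξ n` and `z = ζ n`. -/
def nextXi (n : ℕ) (x z : ℤ → ℚ) (k : ℤ) : ℚ :=
  ((1 + 2 * k : ℤ) : ℚ) * x k + ((n - 2 * k + 1 : ℤ) : ℚ) * x (k - 1) + z (k - 1) / 2

/-- The row `ζ (n + 1)` in terms of the rows `x = ξ n` and `z = ζ n`. -/
def nextZeta (n : ℕ) (x z : ℤ → ℚ) (k : ℤ) : ℚ :=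
  ((2 * (1 + k) : ℤ) : ℚ) * z k + ((n - 2 * k : ℤ) : ℚ) * z (k - 1) + 2 * x k

structure RowInvariant (n : ℕ) (x z : ℤ → ℚ) : Prop where
  x_mem : ∀ k, x k ∈ (⊥ : Subsemiring ℚ)
  half_z_mem : ∀ k, z k / 2 ∈ (⊥ : Subsemiring ℚ)
  x_eq_zero : ∀ k : ℤ, k < 0 ∨ n ≤ 2 * k → x k = 0
  z_eq_zero : ∀ k : ℤ, k < 0 ∨ n ≤ 2 * k + 1 → z k = 0

theorem rowInvariant_one {x z : ℤ → ℚ} (hx0 : x 0 = 1) (hx : ∀ k, k ≠ 0 → x k = 0)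
    (hz : ∀ k, z k = 0) : RowInvariant 1 x z where
  x_mem k := by
    rcases eq_or_ne k 0 with rfl | hk
    · rw [hx0]
      exact one_mem _
    · rw [hx k hk]
      exact zero_mem _
  half_z_mem k := by
    rw [hz k, zero_div]
    exact zero_mem _
  x_eq_zero k hk := hx k (by omega)
  z_eq_zero k _ := hz k

namespace RowInvariant

variable {n : ℕ} {x z : ℤ → ℚ}

theorem z_mem (h : RowInvariant n x z) (k : ℤ) : z k ∈ (⊥ : Subsemiring ℚ) :=
  add_halves (z k) ▸ add_mem (h.half_z_mem k) (h.half_z_mem k)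

theorem nextXi_mem (h : RowInvariant n x z) (k : ℤ) :
    nextXi n x z k ∈ (⊥ : Subsemiring ℚ) :=
  add_mem (add_mem
    (intCast_mul_mem_bot (h.x_mem k) fun hc => h.x_eq_zero k (by omega))
    (intCast_mul_mem_bot (h.x_mem (k - 1)) fun hc => h.x_eq_zero (k - 1) (by omega)))
    (h.half_z_mem (k - 1))

theorem half_nextZeta_mem (h : RowInvariant n x z) (k : ℤ) :
    nextZeta n x z k / 2 ∈ (⊥ : Subsemiring ℚ) := by
  have hsplit : nextZeta n x z k / 2
      = ((1 + k : ℤ) : ℚ) * z k + ((n - 2 * k : ℤ) : ℚ) * (z (k - 1) / 2) + x k := by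
    simp only [nextZeta]
    push_cast
    ring
  rw [hsplit]
  refine add_mem (add_mem ?_ ?_) (h.x_mem k)
  · exact intCast_mul_mem_bot (h.z_mem k) fun hc => h.z_eq_zero k (by omega)
  · refine intCast_mul_mem_bot (h.half_z_mem (k - 1)) fun hc => ?_
    rw [h.z_eq_zero (k - 1) (by omega), zero_div]

/-- At `2k = n + 1` the middle coefficient of `nextXi` vanishes although `x (k - 1)` need not. -/
theorem nextXi_eq_zero (h : RowInvariant n x z) (k : ℤ) (hk : k < 0 ∨ (n + 1 : ℕ) ≤ 2 * k) :
    nextXi n x z k = 0 := by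
  have hmid : ((n - 2 * k + 1 : ℤ) : ℚ) * x (k - 1) = 0 := by
    rcases (by omega : n - 2 * k + 1 = 0 ∨ k - 1 < 0 ∨ n ≤ 2 * (k - 1)) with hc | hx
    · rw [hc, Int.cast_zero, zero_mul]
    · rw [h.x_eq_zero _ hx, mul_zero]
  rw [nextXi, hmid, h.x_eq_zero k (by omega), h.z_eq_zero (k - 1) (by omega)]
  ring

/-- At `2k = n` the middle coefficient of `nextZeta` vanishes although `z (k - 1)` need not. -/
theorem nextZeta_eq_zero (h : RowInvariant n x z) (k : ℤ) (hk : k < 0 ∨ (n + 1 : ℕ) ≤ 2 * k + 1) :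
    nextZeta n x z k = 0 := by
  have hmid : ((n - 2 * k : ℤ) : ℚ) * z (k - 1) = 0 := by
    rcases (by omega : n - 2 * k = 0 ∨ k - 1 < 0 ∨ n ≤ 2 * (k - 1) + 1) with hc | hz
    · rw [hc, Int.cast_zero, zero_mul]
    · rw [h.z_eq_zero _ hz, mul_zero]
  rw [nextZeta, hmid, h.z_eq_zero k (by omega), h.x_eq_zero k (by omega)]
  ring

theorem next (h : RowInvariant n x z) : RowInvariant (n + 1) (nextXi n x z) (nextZeta n x z) :=
  ⟨h.nextXi_mem, h.half_nextZeta_mem, h.nextXi_eq_zero, h.nextZeta_eq_zero⟩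

end RowInvariant

end XiZeta

open XiZeta in
theorem xi_zeta_nonneg_integers_general
    (ξ ζ : ℕ → ℤ → ℚ)
    (hξ10 : ξ 1 0 = 1) (hξ1 : ∀ k : ℤ, k ≠ 0 → ξ 1 k = 0)
    (hζ1 : ∀ k : ℤ, ζ 1 k = 0)
    (hrec : ∀ n : ℕ, 1 ≤ n → ∀ k : ℤ,
      ξ (n + 1) k = (1 + 2 * (k : ℚ)) * ξ n k
          + ((n : ℚ) - 2 * (k : ℚ) + 1) * ξ n (k - 1) + (1/2) * ζ n (k - 1) ∧
      ζ (n + 1) k = 2 * (1 + (k : ℚ)) * ζ n k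
          + ((n : ℚ) - 2 * (k : ℚ)) * ζ n (k - 1) + 2 * ξ n k) :
    ∀ n : ℕ, 1 ≤ n → ∀ k : ℤ,
      (∃ a : ℕ, ξ n k = (a : ℚ)) ∧ (∃ b : ℕ, ζ n k = (b : ℚ)) := by
  have hrow : ∀ n, 1 ≤ n → RowInvariant n (ξ n) (ζ n) := by
    intro n hn
    induction n, hn using Nat.le_induction with
    | base => exact rowInvariant_one hξ10 hξ1 hζ1
    | succ n hn ih =>
      have hξ : ξ (n + 1) = nextXi n (ξ n) (ζ n) := funext fun k => by
        rw [(hrec n hn k).1, nextXi]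
        push_cast
        ring
      have hζ : ζ (n + 1) = nextZeta n (ξ n) (ζ n) := funext fun k => by
        rw [(hrec n hn k).2, nextZeta]
        push_cast
        ring
      rw [hξ, hζ]
      exact ih.next
  intro n hn k
  obtain ⟨a, ha⟩ := Subsemiring.mem_bot.1 ((hrow n hn).x_mem k)
  obtain ⟨b, hb⟩ := Subsemiring.mem_bot.1 ((hrow n hn).z_mem k)
  exact ⟨⟨a, ha.symm⟩, ⟨b, hb.symm⟩⟩

theorem xi_zeta_nonneg_integers
    (ξ ζ : ℕ → ℤ → ℚ)
    (hξ10 : ξ 1 0 = 1) (hξ1 : ∀ k : ℤ, k ≠ 0 → ξ 1 k = 0)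
    (hζ1 : ∀ k : ℤ, ζ 1 k = 0)
    (hneg : ∀ (n : ℕ) (k : ℤ), k < 0 → ξ n k = 0 ∧ ζ n k = 0)
    (hrec : ∀ n : ℕ, 1 ≤ n → ∀ k : ℤ,
      ξ (n + 1) k = (1 + 2 * (k : ℚ)) * ξ n k
          + ((n : ℚ) - 2 * (k : ℚ) + 1) * ξ n (k - 1) + (1/2) * ζ n (k - 1) ∧
      ζ (n + 1) k = 2 * (1 + (k : ℚ)) * ζ n k
          + ((n : ℚ) - 2 * (k : ℚ)) * ζ n (k - 1) + 2 * ξ n k) :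
    ∀ n : ℕ, 1 ≤ n → ∀ k : ℤ,
      (∃ a : ℕ, ξ n k = (a : ℚ)) ∧ (∃ b : ℕ, ζ n k = (b : ℚ)) :=
  xi_zeta_nonneg_integers_general ξ ζ hξ10 hξ1 hζ1 hrec
end

section
/- For all n ≥ 2, the bivariate polynomial b_n(x,y) = Σ_{π ∈ S_n^B} x^{des_A(π)} y^{des_B(π)} satisfies b_n(x,y) = (1+y)·Σ_{k≥0} 4^k T(n,2k+1) (xy)^k (1+xy)^{n-1-2k} + y(1+x)·Σ_{k≥0} 2·4^k T(n,2k+2) (xy)^k (1+xy)^{n-2-2k}, where T(n,j) is the number of permutations in S_n with exactly j up-down runs. -/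
/-- The number of up-down runs of `σ ∈ S_n`: the number of maximal monotone
consecutive subsequences of `0 σ(1) σ(2) ⋯ σ(n)`; equivalently, for `n ≥ 1`,
one plus the number of interior turning points (peaks or valleys) of that word. -/
def udrun (n : ℕ) (σ : Equiv.Perm (Fin n)) : ℕ :=
  if n = 0 then 0 else
    1 + ((Finset.Icc 2 n).filter fun i =>
      (pEnt n σ (i - 2) < pEnt n σ (i - 1) ∧ pEnt n σ i < pEnt n σ (i - 1)) ∨
      (pEnt n σ (i - 1) < pEnt n σ (i - 2) ∧ pEnt n σ (i - 1) < pEnt n σ i)).card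

/-- `T n j` is the number of permutations in `S_n` with exactly `j` up-down runs. -/
def udrunCount (n j : ℕ) : ℕ :=
  (Finset.univ.filter fun σ : Equiv.Perm (Fin n) => udrun n σ = j).card

/-!
Fix the underlying permutation `σ` and sum over the signs. Whether a signed pair is a descent
depends only on the two signs and on whether `σ` descends there, so the sign sum is a product of
`2 × 2` transfer matrices. It evaluates to `1 + y` or `y (1 + x)`, according to whether `σ`
starts with a descent, times a factor `1 + xy` for each position where the descent word of `σ`
continues, `2` at each valley and `2xy` at each peak, the word being closed by a final ascent.
Read backwards, that word is the descent word of `0 σ'(1) ⋯ σ'(n)` for the reverse-complement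
`σ'` of `σ`, whose turning points count the up-down runs of `σ'`; as reverse-complementation is a
bijection, summing over `σ` gives the formula.
-/
open Finset

theorem count_congr_of_lt {p q : ℕ → Prop} [DecidablePred p] [DecidablePred q] {N : ℕ}
    (h : ∀ k < N, p k ↔ q k) : Nat.count p N = Nat.count q N := by
  simp only [Nat.count_eq_card_filter_range]
  exact congrArg card (filter_congr fun k hk => h k (mem_range.1 hk))

theorem card_filter_Icc_eq_count (p : ℕ → Prop) [DecidablePred p] (a b : ℕ) :
    #{i ∈ Icc a b | p i} = Nat.count (fun k => p (k + a)) (b + 1 - a) := by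
  rw [Nat.count_eq_card_filter_range]
  apply card_nbij' (· - a) (· + a)
  · intro i hi
    simp only [coe_filter, mem_Icc, Set.mem_ofPred_eq, mem_range] at hi ⊢
    refine ⟨by omega, ?_⟩
    rw [Nat.sub_add_cancel hi.1.1]; exact hi.2
  · intro k hk
    simp only [coe_filter, mem_Icc, Set.mem_ofPred_eq, mem_range] at hk ⊢
    exact ⟨by omega, hk.2⟩
  · intro i hi
    simp only [coe_filter, mem_Icc, Set.mem_ofPred_eq] at hi
    dsimp only
    omega
  · intro k _
    simp

theorem Fintype.sum_fin_succ_pi {α M : Type*} [Fintype α] [AddCommMonoid M] {n : ℕ}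
    (f : (Fin (n + 1) → α) → M) :
    ∑ ε, f ε = ∑ ε : Fin n → α, ∑ b, f (Fin.snoc ε b) := by
  rw [← (Fin.snocEquiv fun _ => α).sum_comp, Fintype.sum_prod_type_right]
  rfl

section BoolWords

def turns (d : ℕ → Bool) (N : ℕ) : ℕ := Nat.count (fun i => d i ≠ d (i + 1)) N

def rises (d : ℕ → Bool) (N : ℕ) : ℕ := Nat.count (fun i => d i < d (i + 1)) N

theorem turns_le (d : ℕ → Bool) (N : ℕ) : turns d N ≤ N := Nat.count_le _

theorem two_mul_rises_add (d : ℕ → Bool) (N : ℕ) :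
    2 * rises d N + (d 0).toNat = turns d N + (d N).toNat := by
  induction N with
  | zero => simp [rises, turns]
  | succ N ih =>
    simp only [rises, turns, Nat.count_succ] at ih ⊢
    rcases hN : d N <;> cases d (N + 1) <;> simp +decide [hN] at ih ⊢ <;> omega

theorem turns_reverse (e : ℕ → Bool) (N : ℕ) : turns (fun k => e (N - k)) N = turns e N := by
  simp only [turns, Nat.count_eq_card_filter_range]
  apply card_nbij' (fun i => N - 1 - i) (fun i => N - 1 - i)
  · intro i hi
    simp only [coe_filter, mem_range, Set.mem_ofPred_eq] at hi ⊢
    refine ⟨by omega, ?_⟩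
    rw [show N - 1 - i + 1 = N - i by omega, show N - 1 - i = N - (i + 1) by omega]
    exact Ne.symm hi.2
  · intro i hi
    simp only [coe_filter, mem_range, Set.mem_ofPred_eq] at hi ⊢
    refine ⟨by omega, ?_⟩
    rw [show N - (N - 1 - i) = i + 1 by omega, show N - (N - 1 - i + 1) = i by omega]
    exact Ne.symm hi.2
  · intro i hi
    simp only [coe_filter, mem_range, Set.mem_ofPred_eq] at hi
    dsimp only
    omega
  · intro i hi
    simp only [coe_filter, mem_range, Set.mem_ofPred_eq] at hi
    dsimp only
    omega

variable {n : ℕ}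

/-- Signs are indexed from `0` and read as `false` out of range. -/
def signAt (ε : Fin n → Bool) (k : ℕ) : Bool := if h : k < n then ε ⟨k, h⟩ else false

theorem signAt_snoc (ε : Fin n → Bool) (b : Bool) (k : ℕ) :
    signAt (Fin.snoc ε b : Fin (n + 1) → Bool) k = if k = n then b else signAt ε k := by
  unfold signAt
  split_ifs <;> simp_all [Fin.snoc]
  all_goals omega

/-- Whether `±u > ±v` for positive `u ≠ v`, where `a`, `b` are the signs (`true` for negative)
and `d = decide (v < u)`. -/
def signedDescent (a b d : Bool) : Bool := if a then b && !d else b || d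

def signedDescents (d : ℕ → Bool) (ε : Fin n → Bool) : ℕ :=
  Nat.count (fun k => signedDescent (signAt ε k) (signAt ε (k + 1)) (d k)) (n - 1)

theorem signedDescents_snoc (d : ℕ → Bool) (hn : 1 ≤ n) (ε : Fin n → Bool) (b : Bool) :
    signedDescents d (Fin.snoc ε b : Fin (n + 1) → Bool) =
      signedDescents d ε + (signedDescent (signAt ε (n - 1)) b (d (n - 1))).toNat := by
  obtain ⟨m, rfl⟩ : ∃ m, n = m + 1 := ⟨n - 1, by omega⟩
  unfold signedDescents
  rw [Nat.add_sub_cancel, Nat.add_sub_cancel, Nat.count_succ]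
  congr 1
  · apply count_congr_of_lt
    intro k hk
    rw [signAt_snoc, signAt_snoc, if_neg (by omega), if_neg (by omega)]
  · simp only [signAt_snoc, if_pos, if_neg (by omega : m ≠ m + 1)]
    cases signedDescent (signAt ε m) b (d m) <;> rfl

variable {R : Type*} [CommSemiring R] (t y : R)

def signedWeight (d : ℕ → Bool) (ε : Fin n → Bool) : R :=
  t ^ signedDescents d ε * y ^ (signAt ε 0).toNat

def initFactor (p : Bool) : R := if p then t + y else 1 + y

def runFactor (p q : Bool) : R := if p = q then 1 + t else 2 * t ^ q.toNat

def lastRatio (p : Bool) : R := if p then 1 else t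

theorem sum_signedWeight_snoc (d : ℕ → Bool) (hn : 1 ≤ n) (h : Bool → R) :
    ∑ ε : Fin (n + 1) → Bool, signedWeight t y d ε * h (signAt ε n) =
      ∑ ε : Fin n → Bool, signedWeight t y d ε *
        ∑ b, t ^ (signedDescent (signAt ε (n - 1)) b (d (n - 1))).toNat * h b := by
  rw [Fintype.sum_fin_succ_pi]
  refine sum_congr rfl fun ε _ => ?_
  rw [mul_sum]
  refine sum_congr rfl fun b _ => ?_
  simp only [signedWeight, signedDescents_snoc d hn, signAt_snoc, if_pos,
    if_neg (by omega : 0 ≠ n), pow_add]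
  ring

/-- Summing out the last sign keeps the weight of a negative last sign equal to `lastRatio`
times that of a positive one, and multiplies the latter by `runFactor`. -/
theorem sum_signedWeight_mul (d : ℕ → Bool) (m : ℕ) (h : Bool → R) :
    ∑ ε : Fin (m + 2) → Bool, signedWeight t y d ε * h (signAt ε (m + 1)) =
      initFactor t y (d 0) * (∏ i ∈ range m, runFactor t (d i) (d (i + 1))) *
        (h false + lastRatio t (d m) * h true) := by
  induction m generalizing h with
  | zero =>
    rw [sum_signedWeight_snoc t y d le_rfl, Fintype.sum_fin_succ_pi]
    cases d 0 <;> simp [signedWeight, signedDescents, signAt_snoc, signedDescent, initFactor,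
      lastRatio] <;> ring
  | succ m ih =>
    rw [sum_signedWeight_snoc t y d (by omega), show m + 2 - 1 = m + 1 from rfl]
    refine (ih fun a => ∑ b, t ^ (signedDescent a b (d (m + 1))).toNat * h b).trans ?_
    rw [prod_range_succ]
    rcases d m <;> rcases d (m + 1) <;> simp [signedDescent, runFactor, lastRatio] <;> ring

theorem sum_signedWeight {d : ℕ → Bool} {m : ℕ} (hd : d (m + 1) = false) :
    ∑ ε : Fin (m + 2) → Bool, signedWeight t y d ε =
      initFactor t y (d 0) * ∏ i ∈ range (m + 1), runFactor t (d i) (d (i + 1)) := by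
  have h := sum_signedWeight_mul t y d m fun _ => 1
  simp only [mul_one] at h
  rw [h, prod_range_succ, hd, mul_assoc]
  congr 2
  cases d m <;> norm_num [runFactor, lastRatio, add_comm]

theorem prod_runFactor (d : ℕ → Bool) (N : ℕ) :
    ∏ i ∈ range N, runFactor t (d i) (d (i + 1)) =
      (1 + t) ^ (N - turns d N) * 2 ^ turns d N * t ^ rises d N := by
  induction N with
  | zero => simp [turns, rises]
  | succ N ih =>
    have hle := turns_le d N
    rw [prod_range_succ, ih]
    simp only [turns, rises, Nat.count_succ, ne_eq] at hle ⊢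
    rcases d N <;> rcases d (N + 1) <;> simp +decide [runFactor]
    all_goals (try rw [Nat.sub_add_comm hle]); ring

end BoolWords

section Permutations

variable {n : ℕ} (σ : Equiv.Perm (Fin n))

theorem pEnt_of_mem {i : ℕ} (h1 : 1 ≤ i) (h2 : i ≤ n) :
    pEnt n σ i = σ ⟨i - 1, by omega⟩ + 1 :=
  dif_pos ⟨h1, h2⟩

theorem pEnt_zero : pEnt n σ 0 = 0 := dif_neg (by omega)

theorem pEnt_pos {i : ℕ} (h1 : 1 ≤ i) (h2 : i ≤ n) : 1 ≤ pEnt n σ i := by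
  rw [pEnt_of_mem σ h1 h2]; omega

theorem pEnt_le (i : ℕ) : pEnt n σ i ≤ n := by
  unfold pEnt
  split_ifs
  · exact (σ _).isLt
  · omega

theorem pEnt_succ_ne {i : ℕ} (h : i + 1 ≤ n) : pEnt n σ (i + 1) ≠ pEnt n σ i := by
  rcases Nat.eq_zero_or_pos i with rfl | hi
  · have := pEnt_pos σ (i := 0 + 1) (by omega) h
    rw [pEnt_zero]; omega
  · rw [pEnt_of_mem σ (by omega) h, pEnt_of_mem σ hi (by omega)]
    intro heq
    have := congrArg Fin.val (σ.injective (Fin.ext (Nat.succ_injective heq)))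
    simp at this
    omega

def descentWord (k : ℕ) : Bool := decide (pEnt n σ (k + 1) < pEnt n σ k)

theorem descentWord_zero : descentWord σ 0 = false := by
  simp [descentWord, pEnt_zero]

theorem udrun_eq_turns (hn : 1 ≤ n) : udrun n σ = turns (descentWord σ) (n - 1) + 1 := by
  rw [udrun, if_neg (by omega), card_filter_Icc_eq_count, add_comm, show n + 1 - 2 = n - 1 by omega]
  congr 1
  apply count_congr_of_lt
  intro k hk
  have h1 := pEnt_succ_ne σ (i := k) (by omega)
  have h2 : pEnt n σ (k + 2) ≠ pEnt n σ (k + 1) := pEnt_succ_ne σ (by omega)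
  simp only [descentWord, show k + 2 - 2 = k by omega, show k + 2 - 1 = k + 1 by omega,
    show k + 1 + 1 = k + 2 by omega, ne_eq, decide_eq_decide]
  omega

theorem pEnt_revPerm_permCongr {i : ℕ} (h1 : 1 ≤ i) (h2 : i ≤ n) :
    pEnt n (Fin.revPerm.permCongr σ) i = n + 1 - pEnt n σ (n + 1 - i) := by
  rw [pEnt_of_mem _ h1 h2, pEnt_of_mem _ (by omega) (by omega)]
  simp only [Equiv.permCongr_apply, Fin.revPerm_symm, Fin.revPerm_apply, Fin.val_rev]
  have := (σ ⟨n + 1 - i - 1, by omega⟩).isLt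
  rw [show (⟨i - 1, _⟩ : Fin n).rev = ⟨n + 1 - i - 1, by omega⟩ by ext; simp; omega]
  omega

theorem descentWord_revPerm_permCongr {k : ℕ} (h1 : 1 ≤ k) (h2 : k + 1 ≤ n) :
    descentWord (Fin.revPerm.permCongr σ) k = descentWord σ (n - k) := by
  have := pEnt_pos σ (i := n - k) (by omega) (by omega)
  have := pEnt_le σ (n - k + 1)
  simp only [descentWord, pEnt_revPerm_permCongr σ h1 (by omega),
    pEnt_revPerm_permCongr σ (by omega) h2, show n + 1 - (k + 1) = n - k by omega,
    show n + 1 - k = n - k + 1 by omega, decide_eq_decide]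
  omega

variable (ε : Fin n → Bool)

theorem sEnt_of_mem {i : ℕ} (h1 : 1 ≤ i) (h2 : i ≤ n) :
    sEnt n (σ, ε) i = if signAt ε (i - 1) then -(pEnt n σ i : ℤ) else pEnt n σ i := by
  rw [sEnt, dif_pos ⟨h1, h2⟩, pEnt_of_mem σ h1 h2, signAt, dif_pos (by omega)]
  push_cast
  rfl

theorem sEnt_zero : sEnt n (σ, ε) 0 = 0 := dif_neg (by omega)

theorem sEnt_succ_lt_iff {i : ℕ} (h1 : 1 ≤ i) (h2 : i + 1 ≤ n) :
    sEnt n (σ, ε) (i + 1) < sEnt n (σ, ε) i ↔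
      signedDescent (signAt ε (i - 1)) (signAt ε i) (descentWord σ i) = true := by
  rw [sEnt_of_mem σ ε h1 (by omega), sEnt_of_mem σ ε (by omega) h2, Nat.add_sub_cancel]
  have := pEnt_succ_ne σ h2
  have := pEnt_pos σ h1 (by omega)
  have := pEnt_pos σ (by omega) h2
  cases signAt ε (i - 1) <;> cases signAt ε i <;> simp [signedDescent, descentWord] <;> omega

theorem desA_eq_signedDescents {d : ℕ → Bool}
    (hd : ∀ k, k + 2 ≤ n → d k = descentWord σ (k + 1)) :
    desA n (σ, ε) = signedDescents d ε := by
  rw [desA, card_filter_Icc_eq_count, signedDescents, show n - 1 + 1 - 1 = n - 1 by omega]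
  apply count_congr_of_lt
  intro k hk
  rw [sEnt_succ_lt_iff σ ε (by omega) (by omega), hd k (by omega), Nat.add_sub_cancel]

theorem desB_eq (hn : 1 ≤ n) : desB n (σ, ε) = desA n (σ, ε) + (signAt ε 0).toNat := by
  obtain ⟨m, rfl⟩ : ∃ m, n = m + 1 := ⟨n - 1, by omega⟩
  rw [desB, desA, ← Nat.count_eq_card_filter_range, Nat.count_succ', card_filter_Icc_eq_count,
    show m + 1 - 1 + 1 - 1 = m by omega]
  congr 1
  have := Nat.one_le_iff_ne_zero.mp (pEnt_pos σ le_rfl hn)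
  rw [sEnt_zero, sEnt_of_mem σ ε le_rfl hn]
  cases signAt ε (1 - 1) <;> simp [this]

end Permutations

section Expansion

variable (n : ℕ) (x y : ℚ)

def udrunWeight (j : ℕ) : ℚ :=
  (1 + y) * ∑ k ∈ range n,
      (if j = 2 * k + 1 then (4 : ℚ) ^ k * (x * y) ^ k * (1 + x * y) ^ (n - 1 - 2 * k) else 0)
  + y * (1 + x) * ∑ k ∈ range n,
      (if j = 2 * k + 2 then 2 * (4 : ℚ) ^ k * (x * y) ^ k * (1 + x * y) ^ (n - 2 - 2 * k) else 0)

theorem udrunWeight_two_mul_add_one {k : ℕ} (hk : k < n) :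
    udrunWeight n x y (2 * k + 1) =
      (1 + y) * (4 ^ k * (x * y) ^ k * (1 + x * y) ^ (n - 1 - 2 * k)) := by
  rw [udrunWeight, sum_eq_single_of_mem k (mem_range.2 hk), if_pos rfl, sum_eq_zero, mul_zero,
    add_zero]
  · intro i _; rw [if_neg (by omega)]
  · intro i _ hi; rw [if_neg (by omega)]

theorem udrunWeight_two_mul_add_two {k : ℕ} (hk : k < n) :
    udrunWeight n x y (2 * k + 2) =
      y * (1 + x) * (2 * 4 ^ k * (x * y) ^ k * (1 + x * y) ^ (n - 2 - 2 * k)) := by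
  rw [udrunWeight, sum_eq_zero, sum_eq_single_of_mem k (mem_range.2 hk), if_pos rfl, mul_zero,
    zero_add]
  · intro i _ hi; rw [if_neg (by omega)]
  · intro i _; rw [if_neg (by omega)]

theorem sum_udrunWeight_udrun :
    ∑ σ : Equiv.Perm (Fin n), udrunWeight n x y (udrun n σ) =
      (1 + y) * ∑ k ∈ range n,
          (4 : ℚ) ^ k * udrunCount n (2 * k + 1) * (x * y) ^ k * (1 + x * y) ^ (n - 1 - 2 * k)
      + y * (1 + x) * ∑ k ∈ range n,
          2 * (4 : ℚ) ^ k * udrunCount n (2 * k + 2) * (x * y) ^ k *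
            (1 + x * y) ^ (n - 2 - 2 * k) := by
  simp only [udrunWeight, sum_add_distrib, ← mul_sum]
  rw [sum_comm, sum_comm (s := univ)]
  congr 2 <;> refine sum_congr rfl fun k _ => ?_ <;>
    simp [sum_ite, udrunCount] <;> ring

theorem initFactor_mul_eq_udrunWeight {d : ℕ → Bool} {N : ℕ} (hN : d N = false) :
    initFactor (x * y) y (d 0) *
        ((1 + x * y) ^ (N - turns d N) * 2 ^ turns d N * (x * y) ^ rises d N) =
      udrunWeight (N + 1) x y (turns d N + 1) := by
  have hrises := two_mul_rises_add d N
  have hle := turns_le d N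
  have h4 : (2 : ℚ) ^ (2 * rises d N) = 4 ^ rises d N := by
    rw [pow_mul]; norm_num
  rw [hN] at hrises
  rw [initFactor]
  cases h0 : d 0 <;> simp only [h0, Bool.toNat_false, Bool.toNat_true, add_zero] at hrises
  · rw [← hrises, udrunWeight_two_mul_add_one _ _ _ (by omega), h4,
      show N - 2 * rises d N = N + 1 - 1 - 2 * rises d N by omega]
    simp only [Bool.false_eq_true, if_false]
    ring
  · rw [← hrises, show 2 * rises d N + 1 + 1 = 2 * rises d N + 2 by ring,
      udrunWeight_two_mul_add_two _ _ _ (by omega), pow_succ, h4,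
      show N - (2 * rises d N + 1) = N + 1 - 2 - 2 * rises d N by omega]
    simp only [if_true]
    ring

theorem sum_signs_eq_udrunWeight (hn : 2 ≤ n) (σ : Equiv.Perm (Fin n)) :
    ∑ ε : Fin n → Bool, x ^ desA n (σ, ε) * y ^ desB n (σ, ε) =
      udrunWeight n x y (udrun n (Fin.revPerm.permCongr σ)) := by
  obtain ⟨m, rfl⟩ : ∃ m, n = m + 2 := ⟨n - 2, by omega⟩
  -- the descent word of `σ` followed by an ascent, as the reversed word of its reverse-complement
  set d : ℕ → Bool := fun k => descentWord (Fin.revPerm.permCongr σ) (m + 1 - k) with hd_def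
  have hd : ∀ k, k + 2 ≤ m + 2 → d k = descentWord σ (k + 1) := fun k hk => by
    show descentWord _ (m + 1 - k) = _
    rw [descentWord_revPerm_permCongr σ (by omega) (by omega)]
    congr 1; omega
  have hlast : d (m + 1) = false := by simp [hd_def, descentWord_zero]
  have hturns : udrun (m + 2) (Fin.revPerm.permCongr σ) = turns d (m + 1) + 1 := by
    rw [udrun_eq_turns _ (by omega), hd_def, turns_reverse]; rfl
  calc ∑ ε : Fin (m + 2) → Bool, x ^ desA (m + 2) (σ, ε) * y ^ desB (m + 2) (σ, ε)
      = ∑ ε : Fin (m + 2) → Bool, signedWeight (x * y) y d ε := by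
        refine sum_congr rfl fun ε _ => ?_
        rw [signedWeight, desB_eq σ ε (by omega), desA_eq_signedDescents σ ε hd, pow_add,
          mul_pow]
        ring
    _ = udrunWeight (m + 2) x y (udrun (m + 2) (Fin.revPerm.permCongr σ)) := by
        rw [sum_signedWeight _ _ hlast, prod_runFactor, hturns,
          initFactor_mul_eq_udrunWeight x y hlast]

end Expansion

theorem bn_expansion (n : ℕ) (hn : 2 ≤ n) (x y : ℚ) :
    ∑ π : SignedPerm n, x ^ desA n π * y ^ desB n π =
      (1 + y) * ∑ k ∈ Finset.range n,
          (4 : ℚ) ^ k * udrunCount n (2 * k + 1) * (x * y) ^ k *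
            (1 + x * y) ^ (n - 1 - 2 * k)
      + y * (1 + x) * ∑ k ∈ Finset.range n,
          2 * (4 : ℚ) ^ k * udrunCount n (2 * k + 2) * (x * y) ^ k *
            (1 + x * y) ^ (n - 2 - 2 * k) := by
  rw [Fintype.sum_prod_type]
  simp only [sum_signs_eq_udrunWeight n x y hn]
  rw [Equiv.sum_comp Fin.revPerm.permCongr fun σ => udrunWeight n x y (udrun n σ)]
  exact sum_udrunWeight_udrun n x y
end

section
/- For n ≥ 1, the number of Stirling permutations σ in Q_{n+1}^{(0)} with even(σ) odd equals the number with even(σ) even, and both equal 2^{n-1}·n!. -/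
/-- A Stirling permutation of the multiset `{1, 2², 3², …, (n+1)²}` (the element `1`
appears once, every other element twice). -/
def IsStirling0 (n : ℕ) (σ : List ℕ) : Prop :=
  (∀ m : ℕ, σ.count m = if m = 1 then 1 else if 2 ≤ m ∧ m ≤ n + 1 then 2 else 0) ∧
  (∀ i s j : ℕ, i < s → s < j → j < σ.length →
    σ.getD i 0 = σ.getD j 0 → σ.getD i 0 < σ.getD s 0)

/-- Entry of `σ` in 1-based indexing, with the boundary convention `σ_0 = 0`. -/
def ent (σ : List ℕ) (i : ℕ) : ℕ := if i = 0 then 0 else σ.getD (i - 1) 0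

/-- Number of ascent-plateaux: indices `2 ≤ i` with `σ_{i-1} < σ_i = σ_{i+1}`. -/
def apQ (σ : List ℕ) : ℕ :=
  ((Finset.Icc 2 (σ.length - 1)).filter fun i =>
    ent σ (i - 1) < ent σ i ∧ ent σ i = ent σ (i + 1)).card

/-- Number of left ascent-plateaux: indices `1 ≤ i` with `σ_{i-1} < σ_i = σ_{i+1}`,
where `σ_0 = 0`. -/
def lapQ (σ : List ℕ) : ℕ :=
  ((Finset.Icc 1 (σ.length - 1)).filter fun i =>
    ent σ (i - 1) < ent σ i ∧ ent σ i = ent σ (i + 1)).card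

/-- Number of even values of `σ`: values `v ∈ {2,…,n+1}` whose first occurrence in `σ`
is at an even (1-based) position. -/
def evenS (n : ℕ) (σ : List ℕ) : ℕ :=
  ((Finset.Icc 2 (n + 1)).filter fun v => σ.idxOf v % 2 = 1).card

/-!
The two copies of the largest value `n + 2` of a Stirling permutation of order `n + 1` are
adjacent, since every entry between them would have to exceed `n + 2`. Deleting them is
therefore a bijection onto pairs `(σ, g)` with `σ` of order `n` and `g` one of its `2n + 2`
gaps, which gives `2ⁿ n!` permutations of order `n`. The inserted value first occurs at the
0-based index `g`, and all other first occurrences move by `0` or `2`, so `evenS` grows by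
`g % 2`. Hence exactly `n + 1` of the `2n + 2` insertions into a fixed `σ` give each parity.
-/

open Finset
open scoped Nat

section insertPair

variable {α : Type*} {v : α} {g : ℕ} {σ : List α}

def insertPair (v : α) (g : ℕ) (σ : List α) : List α := σ.take g ++ v :: v :: σ.drop g

theorem length_insertPair : (insertPair v g σ).length = σ.length + 2 := by
  simp [insertPair]; omega

theorem getD_insertPair (hg : g ≤ σ.length) (k : ℕ) (d : α) :
    (insertPair v g σ).getD k d =
      if k < g then σ.getD k d else if k < g + 2 then v else σ.getD (k - 2) d := by
  have htake : (σ.take g).length = g := by simp; omega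
  simp only [insertPair, List.getD_eq_getElem?_getD]
  split_ifs with h₁ h₂
  · rw [List.getElem?_append_left (by omega), List.getElem?_take_of_lt h₁]
  · rw [List.getElem?_append_right (by omega), htake]
    obtain h | h : k - g = 0 ∨ k - g = 1 := by omega
    all_goals rw [h]; rfl
  · rw [List.getElem?_append_right (by omega), htake,
      show k - g = k - 2 - g + 2 by omega]
    simp [List.getElem?_drop, show g + (k - 2 - g) = k - 2 by omega]

variable [DecidableEq α]

theorem count_insertPair (m : α) :
    (insertPair v g σ).count m = σ.count m + if v = m then 2 else 0 := by
  conv_rhs => rw [← List.take_append_drop g σ]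
  simp only [insertPair, List.count_append, List.count_cons, beq_iff_eq]
  split_ifs <;> omega

theorem idxOf_insertPair_self (hv : v ∉ σ) (hg : g ≤ σ.length) :
    (insertPair v g σ).idxOf v = g := by
  rw [insertPair, List.idxOf_append_of_notMem (fun h => hv (List.mem_of_mem_take h))]
  simp; omega

theorem idxOf_insertPair_of_ne {x : α} (hx : x ≠ v) (hg : g ≤ σ.length) :
    (insertPair v g σ).idxOf x = if σ.idxOf x < g then σ.idxOf x else σ.idxOf x + 2 := by
  induction σ generalizing g with
  | nil => simp_all [insertPair]
  | cons a l ih =>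
    cases g with
    | zero => simp [insertPair, List.idxOf_cons_ne _ (Ne.symm hx)]
    | succ g =>
      have := ih (g := g) (by simpa using hg)
      simp only [insertPair, List.take_succ_cons, List.drop_succ_cons, List.cons_append] at this ⊢
      by_cases hax : a = x
      · simp [hax]
      · simp only [List.idxOf_cons_ne _ hax, this]
        split_ifs <;> omega

theorem insertPair_inj {σ' : List α} {g' : ℕ} (hv : v ∉ σ) (hv' : v ∉ σ')
    (hg : g ≤ σ.length) (hg' : g' ≤ σ'.length) (h : insertPair v g σ = insertPair v g' σ') :
    σ = σ' ∧ g = g' := by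
  obtain rfl : g = g' := by
    rw [← idxOf_insertPair_self hv hg, ← idxOf_insertPair_self hv' hg', h]
  refine ⟨?_, rfl⟩
  have htake : (σ.take g).length = (σ'.take g).length := by simp; omega
  obtain ⟨h₁, h₂⟩ := List.append_inj h htake
  rw [← List.take_append_drop g σ, ← List.take_append_drop g σ', h₁,
    (List.cons.inj (List.cons.inj h₂).2).2]

end insertPair

namespace IsStirling0

variable {n : ℕ} {σ τ : List ℕ}

theorem le_of_mem (h : IsStirling0 n σ) {x : ℕ} (hx : x ∈ σ) : x ≤ n + 1 := by
  have hc : 0 < σ.count x := List.count_pos_iff.2 hx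
  rw [h.1 x] at hc
  split_ifs at hc <;> omega

theorem getD_le (h : IsStirling0 n σ) (k : ℕ) : σ.getD k 0 ≤ n + 1 := by
  rcases lt_or_ge k σ.length with hk | hk
  · exact h.le_of_mem (List.getD_eq_getElem σ 0 hk ▸ List.getElem_mem hk)
  · rw [List.getD_eq_default _ _ hk]; omega

theorem notMem (h : IsStirling0 n σ) : n + 2 ∉ σ :=
  fun hx => by have := h.le_of_mem hx; omega

theorem insertPair_add_two (h : IsStirling0 n σ) {g : ℕ} (hg : g ≤ σ.length) :
    IsStirling0 (n + 1) (insertPair (n + 2) g σ) := by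
  refine ⟨fun m => ?_, fun i s j his hsj hj hij => ?_⟩
  · rw [count_insertPair, h.1 m]
    split_ifs <;> omega
  · rw [length_insertPair] at hj
    have := h.getD_le i; have := h.getD_le j
    have := h.getD_le (i - 2); have := h.getD_le (j - 2)
    rw [getD_insertPair hg, getD_insertPair hg] at hij
    rw [getD_insertPair hg, getD_insertPair hg]
    split_ifs at hij ⊢ <;> first | omega | exact h.2 _ _ _ (by omega) (by omega) (by omega) hij

theorem eq_add_one_of_getD_eq {i j : ℕ} (h : IsStirling0 (n + 1) τ) (hij : i < j)
    (hj : j < τ.length) (hi : τ.getD i 0 = n + 2) (hj' : τ.getD j 0 = n + 2) : j = i + 1 := by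
  by_contra hne
  have := h.2 i (i + 1) j (by omega) (by omega) hj (hi.trans hj'.symm)
  have := h.getD_le (i + 1)
  omega

theorem exists_insertPair (h : IsStirling0 (n + 1) τ) :
    ∃ σ g, g ≤ σ.length ∧ τ = insertPair (n + 2) g σ := by
  have hcount : τ.count (n + 2) = 2 := by rw [h.1]; split_ifs <;> omega
  obtain ⟨A, B, rfl, hA⟩ := List.eq_append_cons_of_mem
    (List.count_pos_iff.1 (show 0 < τ.count (n + 2) by omega))
  have hB : B.count (n + 2) = 1 := by
    simp [List.count_eq_zero.2 hA] at hcount; omega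
  obtain ⟨C, D, rfl⟩ :=
    List.append_of_mem (List.count_pos_iff.1 (show 0 < B.count (n + 2) by omega))
  obtain rfl : C = [] := by
    have hτ : A ++ (n + 2) :: (C ++ (n + 2) :: D) = (A ++ (n + 2) :: C) ++ (n + 2) :: D := by simp
    have := h.eq_add_one_of_getD_eq (i := A.length) (j := (A ++ (n + 2) :: C).length)
      (by simp) (by rw [hτ]; simp) (by simp) (by rw [hτ]; simp)
    simpa using this
  exact ⟨A ++ D, A.length, by simp, by simp [insertPair]⟩

theorem of_insertPair {g : ℕ} (hg : g ≤ σ.length)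
    (h : IsStirling0 (n + 1) (insertPair (n + 2) g σ)) : IsStirling0 n σ := by
  refine ⟨fun m => ?_, fun i s j his hsj hj hij => ?_⟩
  · have := h.1 m
    rw [count_insertPair] at this
    split_ifs at this ⊢ <;> omega
  · have key := h.2 (if i < g then i else i + 2) (if s < g then s else s + 2)
      (if j < g then j else j + 2)
    simp only [getD_insertPair hg, length_insertPair] at key
    split_ifs at key <;> (try simp only [Nat.add_sub_cancel] at key) <;> omega

theorem zero_iff : IsStirling0 0 σ ↔ σ = [1] := by
  refine ⟨fun h => ?_, fun h => ?_⟩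
  · have hmem : ∀ b ∈ σ, b = 1 := fun b hb => by
      have hc := h.1 b
      have := List.count_pos_iff.2 hb
      split_ifs at hc <;> omega
    have hlen : σ.length = 1 := by
      rw [← List.count_eq_length.2 fun b hb => (hmem b hb).symm, h.1]; rfl
    exact List.eq_replicate_iff.2 ⟨hlen, hmem⟩
  · subst h
    refine ⟨fun m => ?_, fun i s j his hsj hj _ => ?_⟩
    · simp [List.count_singleton]; split_ifs <;> omega
    · simp at hj; omega

end IsStirling0

theorem evenS_insertPair {n g : ℕ} {σ : List ℕ} (hv : n + 2 ∉ σ) (hg : g ≤ σ.length) :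
    evenS (n + 1) (insertPair (n + 2) g σ) = evenS n σ + g % 2 := by
  have hrest : {v ∈ Icc 2 (n + 1) | (insertPair (n + 2) g σ).idxOf v % 2 = 1} =
      {v ∈ Icc 2 (n + 1) | σ.idxOf v % 2 = 1} := by
    refine filter_congr fun x hx => ?_
    rw [idxOf_insertPair_of_ne (by simp at hx; omega) hg]
    split_ifs <;> omega
  have hnotMem : n + 2 ∉ {v ∈ Icc 2 (n + 1) | σ.idxOf v % 2 = 1} := by simp
  rw [evenS, evenS, ← insert_Icc_right_eq_Icc_add_one (by omega), filter_insert,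
    show n + 1 + 1 = n + 2 from rfl, idxOf_insertPair_self hv hg, hrest]
  split_ifs with hodd
  · rw [card_insert_of_notMem hnotMem, hodd]
  · omega

theorem card_filter_range_two_mul_add_mod_two (k e : ℕ) {b : ℕ} (hb : b < 2) :
    #{g ∈ range (2 * k) | (e + g) % 2 = b} = k := by
  induction k with
  | zero => simp
  | succ k ih =>
    rw [card_filter, show 2 * (k + 1) = 2 * k + 1 + 1 by ring, sum_range_succ, sum_range_succ,
      ← card_filter, ih]
    split_ifs <;> omega

def stirlingFinset : ℕ → Finset (List ℕ)
  | 0 => {[1]}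
  | n + 1 => (stirlingFinset n ×ˢ range (2 * n + 2)).image fun p => insertPair (n + 2) p.2 p.1

theorem length_of_mem_stirlingFinset :
    ∀ {n : ℕ} {σ : List ℕ}, σ ∈ stirlingFinset n → σ.length = 2 * n + 1
  | 0, σ, h => by simp_all [stirlingFinset]
  | n + 1, σ, h => by
    simp only [stirlingFinset, mem_image, mem_product, mem_range] at h
    obtain ⟨⟨σ', g⟩, ⟨hσ', -⟩, rfl⟩ := h
    rw [length_insertPair, length_of_mem_stirlingFinset hσ']
    ring

theorem mem_stirlingFinset {n : ℕ} {σ : List ℕ} :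
    σ ∈ stirlingFinset n ↔ IsStirling0 n σ := by
  induction n generalizing σ with
  | zero => simp [stirlingFinset, IsStirling0.zero_iff]
  | succ n ih =>
    simp only [stirlingFinset, mem_image, mem_product, mem_range, Prod.exists]
    constructor
    · rintro ⟨σ', g, ⟨hσ', hg⟩, rfl⟩
      exact (ih.1 hσ').insertPair_add_two (by rw [length_of_mem_stirlingFinset hσ']; omega)
    · intro h
      obtain ⟨σ', g, hg, rfl⟩ := h.exists_insertPair
      have hσ' := ih.2 (IsStirling0.of_insertPair hg h)
      exact ⟨σ', g, ⟨hσ', by rw [length_of_mem_stirlingFinset hσ'] at hg; omega⟩, rfl⟩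

theorem injOn_insertPair (n : ℕ) :
    Set.InjOn (fun p : List ℕ × ℕ => insertPair (n + 2) p.2 p.1)
      (stirlingFinset n ×ˢ range (2 * n + 2) : Finset _) := by
  rintro ⟨σ, g⟩ hp ⟨σ', g'⟩ hp' h
  simp only [coe_product, Set.mem_prod, mem_coe, mem_range] at hp hp'
  have hlen := length_of_mem_stirlingFinset hp.1
  have hlen' := length_of_mem_stirlingFinset hp'.1
  obtain ⟨rfl, rfl⟩ := insertPair_inj (mem_stirlingFinset.1 hp.1).notMem
    (mem_stirlingFinset.1 hp'.1).notMem (by omega) (by omega) h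
  rfl

theorem card_stirlingFinset (n : ℕ) : #(stirlingFinset n) = 2 ^ n * n ! := by
  induction n with
  | zero => rfl
  | succ n ih =>
    rw [stirlingFinset, card_image_of_injOn (injOn_insertPair n), card_product, ih, card_range,
      Nat.factorial_succ]
    ring

theorem card_filter_evenS_mod_two (n : ℕ) {b : ℕ} (hb : b < 2) :
    #{σ ∈ stirlingFinset (n + 1) | evenS (n + 1) σ % 2 = b} = 2 ^ n * (n + 1)! := by
  rw [stirlingFinset, filter_image,
    card_image_of_injOn ((injOn_insertPair n).mono (coe_subset.2 (filter_subset _ _))),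
    card_filter, sum_product]
  have hfiber : ∀ σ ∈ stirlingFinset n,
      (∑ g ∈ range (2 * n + 2),
        if evenS (n + 1) (insertPair (n + 2) g σ) % 2 = b then 1 else 0) = n + 1 := by
    intro σ hσ
    have hlen := length_of_mem_stirlingFinset hσ
    rw [← card_filter]
    refine (congrArg card (filter_congr fun g hg => ?_)).trans
      (card_filter_range_two_mul_add_mod_two (n + 1) (evenS n σ) hb)
    rw [evenS_insertPair (mem_stirlingFinset.1 hσ).notMem (by simp at hg; omega), Nat.add_mod_mod]
  rw [sum_congr rfl hfiber, sum_const, smul_eq_mul, card_stirlingFinset, Nat.factorial_succ]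
  ring

theorem even_odd_split (n : ℕ) (hn : 1 ≤ n) :
    Set.ncard {σ : List ℕ | IsStirling0 n σ ∧ Odd (evenS n σ)} =
        2 ^ (n - 1) * n.factorial ∧
      Set.ncard {σ : List ℕ | IsStirling0 n σ ∧ Even (evenS n σ)} =
        2 ^ (n - 1) * n.factorial := by
  obtain ⟨m, rfl⟩ : ∃ m, n = m + 1 := ⟨n - 1, by omega⟩
  have hcard : ∀ b < 2, Set.ncard {σ | IsStirling0 (m + 1) σ ∧ evenS (m + 1) σ % 2 = b} =
      2 ^ m * (m + 1)! := fun b hb => by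
    rw [← card_filter_evenS_mod_two m hb, ← Set.ncard_coe_finset]
    congr 1
    ext σ
    simp [mem_stirlingFinset]
  simpa [Nat.odd_iff, Nat.even_iff] using ⟨hcard 1 one_lt_two, hcard 0 two_pos⟩
end

section
/- Define the grammar-derivation operator D on ℚ[u,v,w] by D(u) = 3w, D(v) = 2uw, D(w) = vw, extended as a derivation. Then for all n ≥ 1, D^{n-1}(w) = Σ_{i+2j+3k = 2n+1} γ_{n,i,j,k} u^i v^j w^k for nonnegative integers γ_{n,i,j,k} satisfying γ_{1,0,0,1} = 1 and γ_{n,i,j,k} = 3(i+1)γ_{n-1,i+1,j,k-1} + 2(j+1)γ_{n-1,i-1,j+1,k-1} + k·γ_{n-1,i,j-1,k}. -/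
/-!
Writing `D = 3w ∂_u + 2uw ∂_v + vw ∂_w`, the coefficient of `u^i v^j w^k` in `D p` is
`3(i+1) p_{i+1,j,k-1} + 2(j+1) p_{i-1,j+1,k-1} + k p_{i,j-1,k}`. Reading coefficients at integer
exponent vectors (zero as soon as one exponent is negative) makes this identity hold for all
`(i, j, k)`, so the coefficients of `D^{n-1} w` obey exactly the recurrence defining `γ`. Each
term of the recurrence raises the weight `i + 2j + 3k` by `2`, which confines `γ n` to weight
`2n + 1`.
-/

open MvPolynomial

theorem Finsupp.exists_eq_natCast_of_nonneg {σ : Type*} [Fintype σ] {e : σ → ℤ}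
    (he : 0 ≤ e) :
    ∃ m : σ →₀ ℕ, e = fun s => (m s : ℤ) := by
  refine ⟨Finsupp.equivFunOnFinite.symm fun s => (e s).toNat, ?_⟩
  ext s
  simp [Int.toNat_of_nonneg (he s)]

namespace MvPolynomial

variable {σ R : Type*} [Fintype σ]

section CommSemiring
variable [CommSemiring R]

open Classical in
noncomputable def intCoeff (e : σ → ℤ) : MvPolynomial σ R →ₗ[R] R :=
  if 0 ≤ e then lcoeff R (Finsupp.equivFunOnFinite.symm fun s => (e s).toNat) else 0

theorem intCoeff_of_not_nonneg {e : σ → ℤ} (he : ¬ 0 ≤ e) (p : MvPolynomial σ R) :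
    intCoeff e p = 0 := by
  simp only [intCoeff, if_neg he, LinearMap.zero_apply]

theorem intCoeff_natCast (m : σ →₀ ℕ) (p : MvPolynomial σ R) :
    intCoeff (fun s => (m s : ℤ)) p = coeff m p := by
  have hm : Finsupp.equivFunOnFinite.symm (fun s => (m s : ℤ).toNat) = m := by ext; simp
  have he : (0 : σ → ℤ) ≤ fun s => (m s : ℤ) := fun s => by simp
  simp only [intCoeff, if_pos he, lcoeff_apply, hm]

variable [DecidableEq σ]

theorem intCoeff_one (e : σ → ℤ) :
    intCoeff e (1 : MvPolynomial σ R) = if e = 0 then 1 else 0 := by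
  by_cases he : 0 ≤ e
  · obtain ⟨m, rfl⟩ := Finsupp.exists_eq_natCast_of_nonneg he
    have hm : ((fun s => (m s : ℤ)) = 0) ↔ 0 = m := by
      refine ⟨fun h => ?_, fun h => ?_⟩
      · ext s
        simpa [eq_comm] using congrFun h s
      · ext s
        simp [← h]
    rw [intCoeff_natCast, coeff_one]
    exact if_congr hm.symm rfl rfl
  · rw [intCoeff_of_not_nonneg he, if_neg]
    rintro rfl
    exact he le_rfl

theorem intCoeff_X_mul (e : σ → ℤ) (s : σ) (p : MvPolynomial σ R) :
    intCoeff e (X s * p) = intCoeff (e - Pi.single s 1) p := by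
  by_cases he : 0 ≤ e
  · obtain ⟨m, rfl⟩ := Finsupp.exists_eq_natCast_of_nonneg he
    rw [intCoeff_natCast, coeff_X_mul']
    split_ifs with hs <;> rw [Finsupp.mem_support_iff] at hs
    · have hm : ((fun t => (m t : ℤ)) - Pi.single s 1) =
          fun t => ((m - Finsupp.single s 1 : σ →₀ ℕ) t : ℤ) := by
        ext t
        rcases eq_or_ne t s with rfl | hts <;> simp [*]
        omega
      rw [hm, intCoeff_natCast]
    · refine (intCoeff_of_not_nonneg (fun h => ?_) p).symm
      have := h s
      simp_all
  · rw [intCoeff_of_not_nonneg he, intCoeff_of_not_nonneg]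
    intro h
    refine he fun t => ?_
    have := h t
    rcases eq_or_ne t s with rfl | hts <;> simp_all
    omega

end CommSemiring

theorem intCoeff_pderiv [CommRing R] [DecidableEq σ] (e : σ → ℤ) (s : σ)
    (p : MvPolynomial σ R) :
    intCoeff e (pderiv s p) = ((e s + 1 : ℤ) : R) * intCoeff (e + Pi.single s 1) p := by
  by_cases he : 0 ≤ e
  · obtain ⟨m, rfl⟩ := Finsupp.exists_eq_natCast_of_nonneg he
    have hm : ((fun t => (m t : ℤ)) + Pi.single s 1) =
        fun t => ((m + Finsupp.single s 1 : σ →₀ ℕ) t : ℤ) := by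
      ext t
      rcases eq_or_ne t s with rfl | hts <;> simp [*]
    rw [intCoeff_natCast, coeff_pderiv, hm, intCoeff_natCast, mul_comm]
    push_cast
    rfl
  · rw [intCoeff_of_not_nonneg he]
    by_cases hs : e s = -1
    · simp [hs]
    · refine (mul_eq_zero_of_right _ (intCoeff_of_not_nonneg (fun h => he fun t => ?_) p)).symm
      have := h t
      rcases eq_or_ne t s with rfl | hts <;> simp_all
      omega

end MvPolynomial

def grammarCoeff : ℕ → ℤ → ℤ → ℤ → ℕ
  | 0, _, _, _ => 0
  | 1, i, j, k => if i = 0 ∧ j = 0 ∧ k = 1 then 1 else 0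
  | n + 2, i, j, k =>
    if 0 ≤ i ∧ 0 ≤ j ∧ 0 ≤ k then
      3 * (i + 1).toNat * grammarCoeff (n + 1) (i + 1) j (k - 1)
        + 2 * (j + 1).toNat * grammarCoeff (n + 1) (i - 1) (j + 1) (k - 1)
        + k.toNat * grammarCoeff (n + 1) i (j - 1) k
    else 0

theorem grammarCoeff_of_neg {n : ℕ} {i j k : ℤ} (h : i < 0 ∨ j < 0 ∨ k < 0) :
    grammarCoeff n i j k = 0 := by
  match n with
  | 0 => rfl
  | 1 => rw [grammarCoeff, if_neg (by omega)]
  | n + 2 => rw [grammarCoeff, if_neg (by omega)]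

theorem grammarCoeff_add_two (n : ℕ) {i j k : ℤ} (hi : 0 ≤ i) (hj : 0 ≤ j) (hk : 0 ≤ k) :
    (grammarCoeff (n + 2) i j k : ℤ) =
      3 * (i + 1) * grammarCoeff (n + 1) (i + 1) j (k - 1)
        + 2 * (j + 1) * grammarCoeff (n + 1) (i - 1) (j + 1) (k - 1)
        + k * grammarCoeff (n + 1) i (j - 1) k := by
  rw [grammarCoeff, if_pos ⟨hi, hj, hk⟩]
  push_cast [Int.toNat_of_nonneg (by omega : 0 ≤ i + 1),
    Int.toNat_of_nonneg (by omega : 0 ≤ j + 1), Int.toNat_of_nonneg hk]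
  ring

theorem grammarCoeff_eq_zero_of_weight_ne {n : ℕ} {i j k : ℤ}
    (h : i + 2 * j + 3 * k ≠ 2 * n + 1) :
    grammarCoeff n i j k = 0 := by
  induction n generalizing i j k with
  | zero => rfl
  | succ n ih =>
    match n with
    | 0 => rw [grammarCoeff, if_neg (by omega)]
    | n + 1 =>
      rw [grammarCoeff]
      split_ifs
      · push_cast at h
        have h₀ : grammarCoeff (n + 1) (i + 1) j (k - 1) = 0 := ih (by push_cast; omega)
        have h₁ : grammarCoeff (n + 1) (i - 1) (j + 1) (k - 1) = 0 := ih (by push_cast; omega)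
        have h₂ : grammarCoeff (n + 1) i (j - 1) k = 0 := ih (by push_cast; omega)
        simp [h₀, h₁, h₂]
      · rfl

section Grammar

variable {R : Type*} [CommRing R]
  {D : Derivation R (MvPolynomial (Fin 3) R) (MvPolynomial (Fin 3) R)}

theorem grammar_apply_eq_pderiv (hu : D (X 0) = 3 * X 2) (hv : D (X 1) = 2 * X 0 * X 2)
    (hw : D (X 2) = X 1 * X 2) (p : MvPolynomial (Fin 3) R) :
    D p = (3 : R) • (X 2 * pderiv 0 p) + (2 : R) • (X 0 * (X 2 * pderiv 1 p))
      + X 1 * (X 2 * pderiv 2 p) := by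
  have hD : D = (3 : R) • ((X 2 : MvPolynomial (Fin 3) R) • pderiv 0)
      + (2 : R) • ((X 0 * X 2 : MvPolynomial (Fin 3) R) • pderiv 1)
      + (X 1 * X 2 : MvPolynomial (Fin 3) R) • pderiv 2 := by
    refine derivation_ext fun i => ?_
    fin_cases i <;>
      simp [hu, hv, hw, pderiv_X, smul_eq_C_mul, map_ofNat C, mul_assoc, mul_comm, mul_left_comm]
  rw [hD]
  simp [mul_assoc]

theorem intCoeff_grammar_apply (hu : D (X 0) = 3 * X 2) (hv : D (X 1) = 2 * X 0 * X 2)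
    (hw : D (X 2) = X 1 * X 2) (p : MvPolynomial (Fin 3) R) (i j k : ℤ) :
    intCoeff ![i, j, k] (D p) = 3 * (i + 1) * intCoeff ![i + 1, j, k - 1] p
      + 2 * (j + 1) * intCoeff ![i - 1, j + 1, k - 1] p + k * intCoeff ![i, j - 1, k] p := by
  have e₀ : (Pi.single 0 1 : Fin 3 → ℤ) = ![1, 0, 0] := by ext t; fin_cases t <;> rfl
  have e₁ : (Pi.single 1 1 : Fin 3 → ℤ) = ![0, 1, 0] := by ext t; fin_cases t <;> rfl
  have e₂ : (Pi.single 2 1 : Fin 3 → ℤ) = ![0, 0, 1] := by ext t; fin_cases t <;> rfl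
  simp [grammar_apply_eq_pderiv hu hv hw, intCoeff_X_mul, intCoeff_pderiv, e₀, e₁, e₂]
  ring

theorem intCoeff_grammar_iterate_X_two (hu : D (X 0) = 3 * X 2) (hv : D (X 1) = 2 * X 0 * X 2)
    (hw : D (X 2) = X 1 * X 2) (n : ℕ) (i j k : ℤ) :
    intCoeff ![i, j, k] (D^[n] (X 2)) = grammarCoeff (n + 1) i j k := by
  induction n generalizing i j k with
  | zero =>
    have e₂ : (Pi.single 2 1 : Fin 3 → ℤ) = ![0, 0, 1] := by ext t; fin_cases t <;> rfl
    rw [Function.iterate_zero_apply, ← mul_one (X 2), intCoeff_X_mul, intCoeff_one, e₂,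
      grammarCoeff]
    simp [funext_iff, Fin.forall_fin_succ, sub_eq_zero]
  | succ n ih =>
    rw [Function.iterate_succ_apply']
    by_cases hijk : 0 ≤ i ∧ 0 ≤ j ∧ 0 ≤ k
    · rw [intCoeff_grammar_apply hu hv hw, ih, ih, ih]
      obtain ⟨hi, hj, hk⟩ := hijk
      have := congrArg (Int.cast : ℤ → R) (grammarCoeff_add_two n hi hj hk)
      push_cast at this
      rw [this]
    · have hneg : ¬ 0 ≤ ![i, j, k] := fun h => hijk ⟨h 0, h 1, h 2⟩
      rw [intCoeff_of_not_nonneg hneg, grammarCoeff_of_neg (by omega), Nat.cast_zero]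

theorem coeff_grammar_iterate_X_two (hu : D (X 0) = 3 * X 2) (hv : D (X 1) = 2 * X 0 * X 2)
    (hw : D (X 2) = X 1 * X 2) (n : ℕ) (m : Fin 3 →₀ ℕ) :
    coeff m (D^[n] (X 2)) = grammarCoeff (n + 1) (m 0) (m 1) (m 2) := by
  have hm : (fun s => (m s : ℤ)) = ![(m 0 : ℤ), m 1, m 2] := by
    ext s; fin_cases s <;> rfl
  rw [← intCoeff_natCast, hm, intCoeff_grammar_iterate_X_two hu hv hw]

end Grammar

theorem coeff_sum_natCast_mul_X_pow {R : Type*} [CommSemiring R] (S : Finset (ℕ × ℕ × ℕ))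
    (f : ℕ × ℕ × ℕ → ℕ) (m : Fin 3 →₀ ℕ) :
    coeff m (∑ p ∈ S, (f p : MvPolynomial (Fin 3) R) * X 0 ^ p.1 * X 1 ^ p.2.1 * X 2 ^ p.2.2) =
      if (m 0, m 1, m 2) ∈ S then (f (m 0, m 1, m 2) : R) else 0 := by
  have hterm (p : ℕ × ℕ × ℕ) :
      coeff m ((f p : MvPolynomial (Fin 3) R) * X 0 ^ p.1 * X 1 ^ p.2.1 * X 2 ^ p.2.2) =
        if p = (m 0, m 1, m 2) then (f p : R) else 0 := by
    have hmono : (f p : MvPolynomial (Fin 3) R) * X 0 ^ p.1 * X 1 ^ p.2.1 * X 2 ^ p.2.2 =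
        monomial (Finsupp.single 0 p.1 + Finsupp.single 1 p.2.1 + Finsupp.single 2 p.2.2)
          (f p : R) := by
      rw [← map_natCast (C : R →+* MvPolynomial (Fin 3) R)]
      simp only [X_pow_eq_monomial, C_mul_monomial, monomial_mul, mul_one]
    rw [hmono, coeff_monomial]
    refine if_congr ?_ rfl rfl
    simp [Finsupp.ext_iff, Fin.forall_fin_succ, Prod.ext_iff, eq_comm]
  simp only [coeff_sum, hterm, Finset.sum_ite_eq']

/-- with `u = X 0`, `v = X 1`, `w = X 2`, and `D` the derivation on
`ℚ[u,v,w]` with `D u = 3w`, `D v = 2uw`, `D w = vw`, the iterates `D^{n-1}(w)` expand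
with nonnegative integer coefficients `γ_{n,i,j,k}` supported on `i + 2j + 3k = 2n+1`
and satisfying the stated recurrence (coefficients with a negative index vanish). -/
theorem grammar_expansion
    (D : Derivation ℚ (MvPolynomial (Fin 3) ℚ) (MvPolynomial (Fin 3) ℚ))
    (hu : D (X 0) = 3 * X 2)
    (hv : D (X 1) = 2 * X 0 * X 2)
    (hw : D (X 2) = X 1 * X 2) :
    ∃ γ : ℕ → ℤ → ℤ → ℤ → ℕ,
      γ 1 0 0 1 = 1 ∧
      (∀ (n : ℕ) (i j k : ℤ), (i < 0 ∨ j < 0 ∨ k < 0) → γ n i j k = 0) ∧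
      (∀ n : ℕ, 2 ≤ n → ∀ i j k : ℤ, 0 ≤ i → 0 ≤ j → 0 ≤ k →
        (γ n i j k : ℤ) =
          3 * (i + 1) * (γ (n - 1) (i + 1) j (k - 1) : ℤ)
            + 2 * (j + 1) * (γ (n - 1) (i - 1) (j + 1) (k - 1) : ℤ)
            + k * (γ (n - 1) i (j - 1) k : ℤ)) ∧
      (∀ n : ℕ, 1 ≤ n →
        (fun p => D p)^[n - 1] (X 2) =
          ∑ p ∈ (Finset.range (2 * n + 2) ×ˢ Finset.range (2 * n + 2) ×ˢ
                Finset.range (2 * n + 2)).filter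
              (fun p => p.1 + 2 * p.2.1 + 3 * p.2.2 = 2 * n + 1),
            ((γ n (p.1 : ℤ) (p.2.1 : ℤ) (p.2.2 : ℤ) : ℕ) : MvPolynomial (Fin 3) ℚ) *
              X 0 ^ p.1 * X 1 ^ p.2.1 * X 2 ^ p.2.2) := by
  refine ⟨grammarCoeff, rfl, fun n i j k => grammarCoeff_of_neg, ?_, ?_⟩
  · intro n hn i j k hi hj hk
    obtain ⟨n, rfl⟩ := Nat.exists_eq_add_of_le' hn
    exact grammarCoeff_add_two n hi hj hk
  · intro n hn
    obtain ⟨n, rfl⟩ := Nat.exists_eq_add_of_le' hn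
    ext m
    rw [coeff_sum_natCast_mul_X_pow _ (fun p => grammarCoeff (n + 1) p.1 p.2.1 p.2.2),
      Nat.add_sub_cancel, coeff_grammar_iterate_X_two hu hv hw]
    split_ifs with hmem
    · rfl
    · have hweight : (m 0 : ℤ) + 2 * m 1 + 3 * m 2 ≠ 2 * (n + 1 : ℕ) + 1 := by
        simp only [Finset.mem_filter, Finset.mem_product, Finset.mem_range] at hmem
        omega
      rw [grammarCoeff_eq_zero_of_weight_ne hweight, Nat.cast_zero]
end

section
/- The joint distribution of the ascent, plateau, descent statistics over Stirling permutations of {1,1,...,n,n} equals the joint distribution of exterior left nodes, exterior middle nodes, exterior right nodes over ternary increasing trees of size n: Σ_{σ ∈ Q_n} x^{asc(σ)} y^{plat(σ)} z^{des(σ)} = Σ_{T ∈ T_n} x^{exl(T)} y^{exm(T)} z^{exr(T)}. -/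
/-- Number of ascents: indices `1 ≤ i ≤ 2n` with `σ_{i-1} < σ_i`. -/
def ascQ (σ : List ℕ) : ℕ :=
  ((Finset.Icc 1 σ.length).filter fun i => ent σ (i - 1) < ent σ i).card

/-- Number of plateaux: indices `1 ≤ i ≤ 2n-1` with `σ_i = σ_{i+1}`. -/
def platQ (σ : List ℕ) : ℕ :=
  ((Finset.Icc 1 (σ.length - 1)).filter fun i => ent σ i = ent σ (i + 1)).card

/-- Number of descents: indices `1 ≤ i ≤ 2n` with `σ_i > σ_{i+1}` (with `σ_{2n+1} = 0`). -/
def desQ (σ : List ℕ) : ℕ :=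
  ((Finset.Icc 1 σ.length).filter fun i => ent σ (i + 1) < ent σ i).card

/-- Ternary plane trees: a tree is either an (unlabelled) exterior node, or an
interior node carrying a label together with an ordered triple of subtrees
(left, middle, right children). -/
inductive TTree where
  | leaf : TTree
  | node : ℕ → TTree → TTree → TTree → TTree

/-- The multiset of labels of the interior nodes. -/
def TTree.labels : TTree → Multiset ℕ
  | .leaf => 0
  | .node v l m r => v ::ₘ (l.labels + m.labels + r.labels)

/-- The tree is increasing: labels strictly increase along any path away from the root. -/
def TTree.Increasing : TTree → Prop
  | .leaf => True
  | .node v l m r => (∀ u ∈ l.labels + m.labels + r.labels, v < u) ∧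
      l.Increasing ∧ m.Increasing ∧ r.Increasing

/-- Indicator: `1` if the tree is a single exterior node. -/
def TTree.isLeaf : TTree → ℕ
  | .leaf => 1
  | _ => 0

/-- The number of exterior left nodes. -/
def TTree.exl : TTree → ℕ
  | .leaf => 0
  | .node _ l m r => l.isLeaf + l.exl + m.exl + r.exl

/-- The number of exterior middle nodes. -/
def TTree.exm : TTree → ℕ
  | .leaf => 0
  | .node _ l m r => m.isLeaf + l.exm + m.exm + r.exm

/-- The number of exterior right nodes. -/
def TTree.exr : TTree → ℕ
  | .leaf => 0
  | .node _ l m r => r.isLeaf + l.exr + m.exr + r.exr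

/-- A ternary increasing tree of size `n`: interior nodes labelled by `1,…,n`,
labels increasing along paths. -/
def IsTernaryIncreasing (n : ℕ) (T : TTree) : Prop :=
  T.Increasing ∧ T.labels = Multiset.map (· + 1) (Multiset.range n)

/-!
Reading a ternary increasing tree in order as `l v m v r` (`TTree.toList`) is a bijection onto
Stirling permutations: between the two copies of `v` lie exactly the labels of its middle subtree,
all larger than `v`; conversely, the two copies of the smallest letter cut a Stirling permutation
into three Stirling permutations on disjoint alphabets, which recursively give the subtrees.
Bordering the word by `0` on both sides, its adjacent pairs correspond to the leaves of the tree: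
a left leaf of `v` sits between a smaller letter and `v` (an ascent), a middle leaf between the two
copies of `v` (a plateau), and a right leaf between `v` and a smaller letter (a descent).
-/

open Finset
open scoped List

def adjCount (o : Ordering) : List ℕ → ℕ
  | a :: b :: w => (if compare a b = o then 1 else 0) + adjCount o (b :: w)
  | _ => 0

theorem adjCount_append_cons (o : Ordering) (X : List ℕ) (c : ℕ) (Y : List ℕ) :
    adjCount o (X ++ c :: Y) = adjCount o (X ++ [c]) + adjCount o (c :: Y) := by
  induction X with
  | nil => simp [adjCount]
  | cons x X ih =>
    cases X with
    | nil => simp [adjCount]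
    | cons x' X => simp only [List.cons_append, adjCount] at ih ⊢; omega

theorem card_filter_Icc_one_eq_range (L : ℕ) (p : ℕ → Prop) [DecidablePred p] :
    #{i ∈ Icc 1 L | p i} = #{i ∈ range L | p (i + 1)} := by
  rw [← Ico_add_one_right_eq_Icc, card_filter, card_filter, sum_Ico_eq_sum_range]
  simp [add_comm]

theorem adjCount_eq_card (o : Ordering) (w : List ℕ) :
    adjCount o w = #{i ∈ range (w.length - 1) | compare (w.getD i 0) (w.getD (i + 1) 0) = o} := by
  induction w with
  | nil => rfl
  | cons a w ih =>
    cases w with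
    | nil => rfl
    | cons b w =>
      rw [adjCount, ih, card_filter, card_filter]
      simp only [List.length_cons, Nat.add_sub_cancel]
      rw [sum_range_succ', add_comm]
      simp

theorem ascQ_eq_adjCount (σ : List ℕ) : ascQ σ = adjCount .lt (0 :: σ) := by
  rw [ascQ, card_filter_Icc_one_eq_range, adjCount_eq_card]
  refine congrArg card (filter_congr fun i _ => ?_)
  cases i <;> simp [ent, compare_lt_iff_lt]

theorem platQ_eq_adjCount (σ : List ℕ) : platQ σ = adjCount .eq σ := by
  rw [platQ, card_filter_Icc_one_eq_range, adjCount_eq_card]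
  refine congrArg card (filter_congr fun i _ => ?_)
  simp [ent]

theorem List.getD_append_singleton_default {α : Type*} (l : List α) (d : α) (i : ℕ) :
    (l ++ [d]).getD i d = l.getD i d := by
  simp only [List.getD_eq_getElem?_getD, List.getElem?_append]
  split_ifs with h
  · rfl
  · simp [List.getElem?_eq_none (not_lt.mp h), List.getElem?_cons]
    split_ifs <;> rfl

theorem desQ_eq_adjCount (σ : List ℕ) : desQ σ = adjCount .gt (σ ++ [0]) := by
  rw [desQ, card_filter_Icc_one_eq_range, adjCount_eq_card, List.length_append,
    List.length_singleton, Nat.add_sub_cancel]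
  refine congrArg card (filter_congr fun i _ => ?_)
  simp only [ent, List.getD_append_singleton_default, compare_gt_iff_gt]
  simp

theorem adjCount_zero_cons (o : Ordering) {σ : List ℕ} (hσ : σ ≠ []) (hpos : ∀ u ∈ σ, 0 < u) :
    adjCount o (0 :: σ) = (if o = .lt then 1 else 0) + adjCount o σ := by
  obtain ⟨c, τ, rfl⟩ := List.exists_cons_of_ne_nil hσ
  have hc : compare 0 c = .lt := compare_lt_iff_lt.mpr (hpos c List.mem_cons_self)
  rw [adjCount, hc]
  simp only [eq_comm (a := Ordering.lt)]

theorem adjCount_append_zero (o : Ordering) {σ : List ℕ} (hσ : σ ≠ []) (hpos : ∀ u ∈ σ, 0 < u) :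
    adjCount o (σ ++ [0]) = adjCount o σ + (if o = .gt then 1 else 0) := by
  obtain ⟨τ, d, rfl⟩ := (List.eq_nil_or_concat' σ).resolve_left hσ
  have hd : compare d 0 = .gt := compare_gt_iff_gt.mpr (hpos d (by simp))
  rw [List.append_assoc, List.singleton_append, adjCount_append_cons]
  simp [adjCount, hd, eq_comm (a := Ordering.gt)]

theorem adjCount_zero_cons_append_zero (o : Ordering) {σ : List ℕ} (hσ : σ ≠ [])
    (hpos : ∀ u ∈ σ, 0 < u) :
    adjCount o (0 :: σ ++ [0]) =
      (if o = .lt then 1 else 0) + adjCount o σ + (if o = .gt then 1 else 0) := by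
  obtain ⟨c, τ, rfl⟩ := List.exists_cons_of_ne_nil hσ
  rw [List.cons_append, List.cons_append, adjCount, ← List.cons_append,
    adjCount_append_zero o hσ hpos, compare_lt_iff_lt.mpr (hpos c List.mem_cons_self), add_assoc]
  simp only [eq_comm (a := Ordering.lt)]

theorem count_map_add_one_range (n m : ℕ) :
    (Multiset.map (· + 1) (Multiset.range n)).count m = if 1 ≤ m ∧ m ≤ n then 1 else 0 := by
  rw [Multiset.count_eq_of_nodup ((Multiset.nodup_range n).map (add_left_injective 1))]
  congr 1
  simp only [Multiset.mem_map, Multiset.mem_range, eq_iff_iff]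
  exact ⟨fun ⟨k, hk, hkm⟩ => by omega, fun h => ⟨m - 1, by omega, by omega⟩⟩

theorem List.triple_sublist_iff {α : Type*} {l : List α} {a b c : α} :
    [a, b, c] <+ l ↔ ∃ (i s j : ℕ) (_ : i < s) (_ : s < j) (hj : j < l.length),
      l[i] = a ∧ l[s] = b ∧ l[j] = c := by
  rw [List.sublist_iff_exists_fin_orderEmbedding_get_eq]
  constructor
  · rintro ⟨f, hf⟩
    refine ⟨f 0, f 1, f 2, f.strictMono (by simp), f.strictMono (by simp [Fin.lt_def]),
      (f 2).isLt, (hf 0).symm, (hf 1).symm, (hf 2).symm⟩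
  · rintro ⟨i, s, j, his, hsj, hj, rfl, rfl, rfl⟩
    have hf : StrictMono (![⟨i, by omega⟩, ⟨s, by omega⟩, ⟨j, hj⟩] : Fin 3 → Fin l.length) := by
      refine Fin.strictMono_iff_lt_succ.mpr fun k => ?_
      fin_cases k <;> simpa [Fin.lt_def]
    exact ⟨OrderEmbedding.ofStrictMono _ hf, fun k => by fin_cases k <;> rfl⟩

theorem List.exists_eq_append_cons_append_cons_of_count_eq_two {α : Type*} [DecidableEq α]
    {l : List α} {a : α} (h : l.count a = 2) :
    ∃ A B C, l = A ++ a :: (B ++ a :: C) ∧ a ∉ A ∧ a ∉ B ∧ a ∉ C := by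
  obtain ⟨A, Z, rfl, hA⟩ :=
    List.eq_append_cons_of_mem (List.count_pos_iff.mp (by omega : 0 < l.count a))
  rw [List.count_append, List.count_cons_self, List.count_eq_zero.mpr hA] at h
  obtain ⟨B, C, rfl, hB⟩ :=
    List.eq_append_cons_of_mem (List.count_pos_iff.mp (by omega : 0 < Z.count a))
  rw [List.count_append, List.count_cons_self, List.count_eq_zero.mpr hB] at h
  exact ⟨A, B, C, rfl, hA, hB, List.count_eq_zero.mp (by omega)⟩

theorem List.append_cons_inj_of_notMem_left_s17 {α : Type*} {A B C D : List α} {a : α}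
    (h : A ++ a :: B = C ++ a :: D) (hA : a ∉ A) (hC : a ∉ C) : A = C ∧ B = D := by
  induction A generalizing C with
  | nil =>
    cases C with
    | nil => exact ⟨rfl, List.cons.inj h |>.2⟩
    | cons y C => exact absurd (List.cons.inj h).1 (fun e => hC (e ▸ List.mem_cons_self))
  | cons x A ih =>
    cases C with
    | nil => exact absurd (List.cons.inj h).1.symm (fun e => hA (e ▸ List.mem_cons_self))
    | cons y C =>
      obtain ⟨rfl, h'⟩ := List.cons.inj h
      obtain ⟨rfl, rfl⟩ := ih h' (fun h' => hA (List.mem_cons_of_mem _ h'))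
        (fun h' => hC (List.mem_cons_of_mem _ h'))
      exact ⟨rfl, rfl⟩

def IsStirlingWord (w : List ℕ) : Prop := ∀ a b, [a, b, a] <+ w → a < b

theorem isStirlingWord_iff_getD (w : List ℕ) :
    IsStirlingWord w ↔ ∀ i s j : ℕ, i < s → s < j → j < w.length →
      w.getD i 0 = w.getD j 0 → w.getD i 0 < w.getD s 0 := by
  constructor
  · intro hw i s j his hsj hj heq
    simp only [List.getD_eq_getElem _ _ (his.trans (hsj.trans hj)), List.getD_eq_getElem _ _ hj,
      List.getD_eq_getElem _ _ (hsj.trans hj)] at heq ⊢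
    exact hw _ _ (List.triple_sublist_iff.mpr ⟨i, s, j, his, hsj, hj, rfl, rfl, heq.symm⟩)
  · rintro hw a b hab
    obtain ⟨i, s, j, his, hsj, hj, rfl, rfl, heq⟩ := List.triple_sublist_iff.mp hab
    have := hw i s j his hsj hj
    simp only [List.getD_eq_getElem _ _ (his.trans (hsj.trans hj)), List.getD_eq_getElem _ _ hj,
      List.getD_eq_getElem _ _ (hsj.trans hj)] at this
    exact this heq.symm

theorem IsStirlingWord.nil : IsStirlingWord [] := fun _ _ h => by simp at h

theorem IsStirlingWord.of_sublist {v w : List ℕ} (hw : IsStirlingWord w) (h : v <+ w) :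
    IsStirlingWord v := fun a b hab => hw a b (hab.trans h)

theorem IsStirlingWord.append {v w : List ℕ} (hv : IsStirlingWord v) (hw : IsStirlingWord w)
    (hvw : v.Disjoint w) : IsStirlingWord (v ++ w) := by
  intro a b hab
  obtain ⟨l₁, l₂, hl, h₁, h₂⟩ := List.sublist_append_iff.mp hab
  match l₁, l₂, hl with
  | [], _, rfl => exact hw a b h₂
  | [_], _, rfl => exact (hvw (List.singleton_sublist.mp h₁) (h₂.subset (by simp))).elim
  | [_, _], _, rfl => exact (hvw (h₁.subset (by simp)) (List.singleton_sublist.mp h₂)).elim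
  | [_, _, _], _, rfl => exact hv a b h₁

theorem IsStirlingWord.cons_append_singleton {v : ℕ} {w : List ℕ} (hw : IsStirlingWord w)
    (hv : ∀ u ∈ w, v < u) : IsStirlingWord (v :: w ++ [v]) := by
  intro a b hab
  rcases List.sublist_cons_iff.mp hab with h | ⟨r, hr, h⟩
  · obtain ⟨l₁, l₂, hl, h₁, h₂⟩ := List.sublist_append_iff.mp h
    match l₁, l₂, hl with
    | [_, _, _], [], rfl => exact hw a b h₁
    | [_, _], [_], rfl =>
      have hav : a = v := by simpa using h₂
      exact absurd (hv a (h₁.subset (by simp))) (by omega)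
    | [_], [_, _], rfl => exact absurd h₂.length_le (by simp)
    | [], [_, _, _], rfl => exact absurd h₂.length_le (by simp)
  · obtain ⟨rfl, rfl⟩ := List.cons_eq_cons.mp hr
    obtain ⟨l₁, l₂, hl, h₁, h₂⟩ := List.sublist_append_iff.mp h
    match l₁, l₂, hl with
    | [_, _], [], rfl => exact absurd (hv a (h₁.subset (by simp))) (by omega)
    | [_], [_], rfl => exact hv b (List.singleton_sublist.mp h₁)
    | [], [_, _], rfl => exact absurd h₂.length_le (by simp)

namespace TTree

def toList : TTree → List ℕ
  | leaf => []
  | node v l m r => l.toList ++ v :: (m.toList ++ v :: r.toList)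

theorem count_toList (T : TTree) (u : ℕ) : T.toList.count u = 2 * T.labels.count u := by
  induction T with
  | leaf => rfl
  | node v l m r ihl ihm ihr =>
    simp only [toList, labels, List.count_append, List.count_cons, Multiset.count_cons,
      Multiset.count_add, ihl, ihm, ihr, beq_iff_eq, eq_comm (a := v)]
    split_ifs <;> omega

theorem mem_toList {T : TTree} {u : ℕ} : u ∈ T.toList ↔ u ∈ T.labels := by
  rw [← List.count_pos_iff, ← Multiset.count_pos, count_toList]
  omega

theorem isStirlingWord_toList {T : TTree} (hI : T.Increasing) (hN : T.labels.Nodup) :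
    IsStirlingWord T.toList := by
  induction T with
  | leaf => exact .nil
  | node v l m r ihl ihm ihr =>
    obtain ⟨hv, hl, hm, hr⟩ := hI
    obtain ⟨-, ⟨hNl, hNm, hlm⟩, hNr, hlmr⟩ := by
      simpa only [labels, Multiset.nodup_cons, Multiset.nodup_add] using hN
    simp only [Multiset.mem_add] at hv
    have e : (node v l m r).toList = l.toList ++ (v :: m.toList ++ [v]) ++ r.toList := by
      simp [toList]
    rw [e]
    refine ((ihl hl hNl).append ((ihm hm hNm).cons_append_singleton fun u hu => ?_) ?_).append
      (ihr hr hNr) ?_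
    · exact hv u (Or.inl (Or.inr (mem_toList.mp hu)))
    · intro u hu hu'
      simp only [List.mem_append, List.mem_cons, List.not_mem_nil, or_false, mem_toList,
        or_assoc] at hu hu'
      have := hv u (Or.inl (Or.inl hu))
      rcases hu' with rfl | hu' | rfl
      · omega
      · exact Multiset.disjoint_left.mp hlm hu hu'
      · omega
    · intro u hu hu'
      simp only [List.mem_append, List.mem_cons, List.not_mem_nil, or_false, mem_toList,
        or_assoc] at hu hu'
      have := hv u (Or.inr hu')
      rcases hu with hu | rfl | hu | rfl
      · exact Multiset.disjoint_left.mp hlmr (Multiset.mem_add.mpr (Or.inl hu)) hu'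
      · omega
      · exact Multiset.disjoint_left.mp hlmr (Multiset.mem_add.mpr (Or.inr hu)) hu'
      · omega

theorem root_le_of_mem_toList {v : ℕ} {l m r : TTree} (hI : (node v l m r).Increasing) {u : ℕ}
    (hu : u ∈ (node v l m r).toList) : v ≤ u := by
  obtain rfl | hne := eq_or_ne u v
  · exact le_rfl
  · refine (hI.1 u ?_).le
    simpa [toList, mem_toList, hne, or_assoc] using hu

theorem eq_of_toList_eq {T T' : TTree} (hT : T.Increasing) (hT' : T'.Increasing)
    (h : T.toList = T'.toList) : T = T' := by
  induction T generalizing T' with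
  | leaf => cases T' <;> simp_all [toList]
  | node v l m r ihl ihm ihr =>
    cases T' with
    | leaf => simp [toList] at h
    | node v' l' m' r' =>
      obtain rfl : v = v' := le_antisymm (root_le_of_mem_toList hT (h ▸ by simp [toList]))
        (root_le_of_mem_toList hT' (h ▸ by simp [toList]))
      have hv : ∀ {l m r : TTree}, (node v l m r).Increasing → v ∉ l.toList ∧ v ∉ m.toList := by
        intro l m r hI
        constructor <;> intro hv <;>
          exact lt_irrefl v (hI.1 v (by simp [mem_toList.mp hv]))
      obtain ⟨hl, h⟩ := List.append_cons_inj_of_notMem_left_s17 h (hv hT).1 (hv hT').1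
      obtain ⟨hm, hr⟩ := List.append_cons_inj_of_notMem_left_s17 h (hv hT).2 (hv hT').2
      rw [ihl hT.2.1 hT'.2.1 hl, ihm hT.2.2.1 hT'.2.2.1 hm, ihr hT.2.2.2 hT'.2.2.2 hr]

theorem exists_toList_eq (w : List ℕ) (hc : ∀ u ∈ w, w.count u = 2) (hw : IsStirlingWord w) :
    ∃ T : TTree, T.Increasing ∧ T.toList = w := by
  rcases eq_or_ne w [] with rfl | hne
  · exact ⟨leaf, trivial, rfl⟩
  obtain ⟨v, hvw, hmin⟩ : ∃ v ∈ w, ∀ u ∈ w, v ≤ u :=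
    ⟨w.min hne, w.min_mem hne, fun _ => w.min_le_of_mem⟩
  -- a letter on both sides of a copy of `v` would enclose the smaller letter `v`
  have hsplit : ∀ {X Y : List ℕ}, X ++ v :: Y <+ w → ∀ u ∈ X, u ∉ Y := fun hXY u hX hY =>
    absurd (hw u v (((List.singleton_sublist.mpr hX).append (List.cons_sublist_cons.mpr
      (List.singleton_sublist.mpr hY))).trans hXY))
      (not_lt.mpr (hmin u (hXY.subset (by simp [hX]))))
  obtain ⟨A, B, C, rfl, hA, hB, hC⟩ :=
    List.exists_eq_append_cons_append_cons_of_count_eq_two (hc v hvw)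
  have hAB := hsplit (List.Sublist.refl _)
  have hBC := hsplit ((List.sublist_cons_self v _).trans (List.sublist_append_right _ _))
  have hcount : ∀ X ∈ [A, B, C], ∀ u ∈ X, X.count u = 2 := by
    clear hsplit
    intro X hX u hu
    have huv : u ≠ v := by grind
    have := hc u (by grind)
    simp only [List.count_append, List.count_cons_of_ne huv.symm] at this
    grind [List.count_eq_zero, List.count_pos_iff]
  obtain ⟨TA, hIA, rfl⟩ := exists_toList_eq A (hcount A (by simp)) (hw.of_sublist (by simp))
  obtain ⟨TB, hIB, rfl⟩ := exists_toList_eq B (hcount B (by simp)) (hw.of_sublist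
    (((List.sublist_append_left B _).cons v).trans (List.sublist_append_right _ _)))
  obtain ⟨TC, hIC, rfl⟩ := exists_toList_eq C (hcount C (by simp)) (hw.of_sublist
    ((((List.sublist_cons_self v C).trans (List.sublist_append_right _ _)).cons v).trans
      (List.sublist_append_right _ _)))
  refine ⟨node v TA TB TC, ⟨fun u hu => ?_, hIA, hIB, hIC⟩, rfl⟩
  simp only [Multiset.mem_add, ← mem_toList] at hu
  refine lt_of_le_of_ne (hmin u ?_) ?_
  · rcases hu with (h | h) | h <;> simp [h]
  · rintro rfl
    rcases hu with (h | h) | h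
    exacts [hA h, hB h, hC h]

termination_by w.length
decreasing_by all_goals (subst_vars; simp only [List.length_append, List.length_cons]; omega)

def exCount (T : TTree) : Ordering → ℕ
  | .lt => T.exl
  | .eq => T.exm
  | .gt => T.exr

theorem adjCount_bracket (o : Ordering) {T : TTree} (hI : T.Increasing) {a b : ℕ}
    (ha : ∀ u ∈ T.labels, a < u) (hb : ∀ u ∈ T.labels, b < u) :
    adjCount o (a :: T.toList ++ [b]) =
      T.isLeaf * (if compare a b = o then 1 else 0) + T.exCount o := by
  induction T generalizing a b with
  | leaf => cases o <;> simp [adjCount, toList, isLeaf, exCount, exl, exm, exr]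
  | node v l m r ihl ihm ihr =>
    obtain ⟨hv, hl, hm, hr⟩ := hI
    simp only [labels, Multiset.mem_cons, Multiset.mem_add] at ha hb hv
    have e : a :: (node v l m r).toList ++ [b] =
        a :: l.toList ++ v :: (m.toList ++ v :: (r.toList ++ [b])) := by
      simp [toList]
    rw [e, adjCount_append_cons, ← List.cons_append (a := v) (as := m.toList),
      adjCount_append_cons o (v :: m.toList),
      ← List.cons_append (a := v) (as := r.toList),
      ihl hl (fun u hu => ha u (by simp [hu])) (fun u hu => hv u (by simp [hu])),
      ihm hm (fun u hu => hv u (by simp [hu])) (fun u hu => hv u (by simp [hu])),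
      ihr hr (fun u hu => hv u (by simp [hu])) (fun u hu => hb u (by simp [hu]))]
    have hav : compare a v = .lt := compare_lt_iff_lt.mpr (ha v (by simp))
    have hvb : compare v b = .gt := compare_gt_iff_gt.mpr (hb v (by simp))
    cases o <;> simp [exCount, exl, exm, exr, isLeaf, hav, hvb] <;> ring

theorem stats_toList {T : TTree} (hI : T.Increasing) (hpos : ∀ u ∈ T.labels, 0 < u) :
    ascQ T.toList = T.exl ∧ platQ T.toList = T.exm ∧ desQ T.toList = T.exr := by
  cases T with
  | leaf => exact ⟨rfl, rfl, rfl⟩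
  | node v l m r =>
    have hne : (node v l m r).toList ≠ [] := by simp [toList]
    have hpos' : ∀ u ∈ (node v l m r).toList, 0 < u := fun u hu => hpos u (mem_toList.mp hu)
    have key (o : Ordering) := (adjCount_bracket o hI hpos hpos).symm.trans
      (adjCount_zero_cons_append_zero o hne hpos')
    have hlt := key .lt
    have heq := key .eq
    have hgt := key .gt
    rw [ascQ_eq_adjCount, platQ_eq_adjCount, desQ_eq_adjCount, adjCount_zero_cons _ hne hpos',
      adjCount_append_zero _ hne hpos']
    simp only [isLeaf, exCount, Std.compare_self, reduceCtorEq, ↓reduceIte, mul_zero, mul_one,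
      zero_add, add_zero] at hlt heq hgt ⊢
    omega

theorem bijOn_toList (n : ℕ) :
    Set.BijOn toList {T | IsTernaryIncreasing n T} {σ | IsStirling n σ} := by
  have hcount (T : TTree) (m : ℕ) (hL : T.labels = Multiset.map (· + 1) (Multiset.range n)) :
      T.toList.count m = if 1 ≤ m ∧ m ≤ n then 2 else 0 := by
    rw [count_toList, hL, count_map_add_one_range]
    split_ifs <;> rfl
  refine ⟨fun T ⟨hI, hL⟩ => ⟨fun m => hcount T m hL, ?_⟩,
    fun T hT T' hT' h => eq_of_toList_eq hT.1 hT'.1 h, fun σ ⟨hc, hσ⟩ => ?_⟩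
  · refine (isStirlingWord_iff_getD _).mp (isStirlingWord_toList hI ?_)
    rw [hL]
    exact (Multiset.nodup_range n).map (add_left_injective 1)
  · have hc2 : ∀ u ∈ σ, σ.count u = 2 := fun u hu => by
      have := hc u
      have := List.count_pos_iff.mpr hu
      split_ifs at * <;> omega
    obtain ⟨T, hI, rfl⟩ := exists_toList_eq σ hc2 ((isStirlingWord_iff_getD σ).mpr hσ)
    refine ⟨T, ⟨hI, Multiset.ext.mpr fun m => ?_⟩, rfl⟩
    have := hc m
    rw [count_toList] at this
    rw [count_map_add_one_range]
    split_ifs at * <;> omega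

end TTree

theorem stirling_vs_ternary_trees (n : ℕ) (x y z : ℚ) :
    ∑ᶠ σ ∈ {σ : List ℕ | IsStirling n σ},
        x ^ ascQ σ * y ^ platQ σ * z ^ desQ σ =
      ∑ᶠ T ∈ {T : TTree | IsTernaryIncreasing n T},
        x ^ T.exl * y ^ T.exm * z ^ T.exr := by
  refine (finsum_mem_eq_of_bijOn TTree.toList (TTree.bijOn_toList n) fun T ⟨hI, hL⟩ => ?_).symm
  have hpos : ∀ u ∈ T.labels, 0 < u := fun u hu => by
    obtain ⟨k, -, rfl⟩ := Multiset.mem_map.mp (hL ▸ hu)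
    exact k.succ_pos
  obtain ⟨hasc, hplat, hdes⟩ := TTree.stats_toList hI hpos
  rw [hasc, hplat, hdes]
end

section
/- The number of Stirling permutation codes of length n, i.e., sequences ((0,0),(a_1,b_1),...,(a_{n-1},b_{n-1})) with 1 ≤ a_i ≤ i, 1 ≤ b_i ≤ 3, and (a_i,b_i) ≠ (a_j,b_j) for all i < j, equals (2n-1)!!. -/
/-!
Strip the leading `(0,0)`: what remains is a repetition-free list `T` whose entry at index `i`
lies in `[1, i+1] × [1, 3]`. Such lists of length `n + 1` are exactly the extensions `T ++ [p]`
of those of length `n` by an admissible pair `p ∉ T`; as the `n` entries of `T` are distinct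
and all admissible at index `n`, there are `3(n+1) - n = 2n + 3` choices of `p`, whence the
count `(2n+1)‼ = (2n+1) · (2n-1)‼`.
-/

/-- A Stirling permutation code of length `n`: a sequence
`((0,0),(a_1,b_1),…,(a_{n-1},b_{n-1}))` with `1 ≤ a_i ≤ i`, `1 ≤ b_i ≤ 3`,
and the pairs `(a_i,b_i)` pairwise distinct. -/
def IsSPCode (n : ℕ) (L : List (ℕ × ℕ)) : Prop :=
  L.length = n ∧
  L.getD 0 (0, 0) = (0, 0) ∧
  (∀ i : ℕ, 1 ≤ i → i ≤ n - 1 →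
    1 ≤ (L.getD i (0, 0)).1 ∧ (L.getD i (0, 0)).1 ≤ i ∧
    1 ≤ (L.getD i (0, 0)).2 ∧ (L.getD i (0, 0)).2 ≤ 3) ∧
  L.tail.Nodup

theorem Finset.card_image_sigma_append_singleton {α : Type*} [DecidableEq α]
    (s : Finset (List α)) (t : List α → Finset α) :
    ((s.sigma t).image fun x => x.1 ++ [x.2]).card = ∑ l ∈ s, (t l).card := by
  rw [Finset.card_image_of_injective, Finset.card_sigma]
  rintro ⟨l₁, a₁⟩ ⟨l₂, a₂⟩ h
  obtain ⟨rfl, h₂⟩ := List.append_inj' h rfl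
  cases List.singleton_inj.mp h₂
  rfl

namespace SPCode

def letters (i : ℕ) : Finset (ℕ × ℕ) := Finset.Icc 1 i ×ˢ Finset.Icc 1 3

theorem mem_letters {i : ℕ} {p : ℕ × ℕ} :
    p ∈ letters i ↔ 1 ≤ p.1 ∧ p.1 ≤ i ∧ 1 ≤ p.2 ∧ p.2 ≤ 3 := by
  simp only [letters, Finset.mem_product, Finset.mem_Icc, and_assoc]

theorem card_letters (i : ℕ) : (letters i).card = 3 * i := by
  simp [letters, mul_comm]

theorem letters_mono : Monotone letters := fun _ _ h _ hp =>
  mem_letters.mpr <| (mem_letters.mp hp).imp_right fun h' => ⟨h'.1.trans h, h'.2⟩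

/-- A code without its leading `(0,0)`: list index `i` holds `(a_{i+1}, b_{i+1})`. -/
def IsTail (T : List (ℕ × ℕ)) : Prop :=
  (∀ i < T.length, T.getD i (0, 0) ∈ letters (i + 1)) ∧ T.Nodup

theorem isTail_append_singleton_iff {T : List (ℕ × ℕ)} {p : ℕ × ℕ} :
    IsTail (T ++ [p]) ↔ IsTail T ∧ p ∈ letters (T.length + 1) ∧ p ∉ T := by
  have hgetD : ∀ i < T.length, (T ++ [p]).getD i (0, 0) = T.getD i (0, 0) :=
    fun i hi => List.getD_append _ _ _ _ hi
  have hnd : (T ++ [p]).Nodup ↔ p ∉ T ∧ T.Nodup :=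
    List.concat_eq_append ▸ List.nodup_concat T p
  simp only [IsTail, List.length_append, List.length_singleton, Nat.forall_lt_succ_right,
    List.getD_append_right _ _ _ _ le_rfl, Nat.sub_self, List.getD_cons_zero, hnd]
  constructor
  · rintro ⟨⟨hT, hp⟩, hpT, hnd⟩
    exact ⟨⟨fun i hi => hgetD i hi ▸ hT i hi, hnd⟩, hp, hpT⟩
  · rintro ⟨⟨hT, hnd⟩, hp, hpT⟩
    exact ⟨⟨fun i hi => (hgetD i hi).symm ▸ hT i hi, hp⟩, hpT, hnd⟩

theorem isSPCode_zero_iff {L : List (ℕ × ℕ)} : IsSPCode 0 L ↔ L = [] := by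
  refine ⟨fun h => List.eq_nil_of_length_eq_zero h.1, ?_⟩
  rintro rfl
  exact ⟨rfl, rfl, fun i h₁ h₂ => by omega, List.nodup_nil⟩

theorem isSPCode_succ_iff {n : ℕ} {L : List (ℕ × ℕ)} :
    IsSPCode (n + 1) L ↔ ∃ T, T.length = n ∧ IsTail T ∧ (0, 0) :: T = L := by
  constructor
  · rintro ⟨hlen, h0, hpos, hnd⟩
    obtain _ | ⟨x, T⟩ := L
    · simp at hlen
    simp only [List.length_cons, Nat.add_right_cancel_iff] at hlen
    refine ⟨T, hlen, ⟨fun i hi => ?_, hnd⟩, h0 ▸ rfl⟩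
    simpa only [mem_letters, List.getD_cons_succ] using hpos (i + 1) (by omega) (by omega)
  · rintro ⟨T, rfl, ⟨hpos, hnd⟩, rfl⟩
    refine ⟨rfl, rfl, fun i h₁ h₂ => ?_, hnd⟩
    obtain ⟨j, rfl⟩ := Nat.exists_eq_add_of_le' h₁
    simpa only [mem_letters, List.getD_cons_succ] using hpos j (by omega)

def tails : ℕ → Finset (List (ℕ × ℕ))
  | 0 => {[]}
  | n + 1 => ((tails n).sigma fun T => letters (n + 1) \ T.toFinset).image fun x => x.1 ++ [x.2]

theorem mem_tails {n : ℕ} {T : List (ℕ × ℕ)} : T ∈ tails n ↔ T.length = n ∧ IsTail T := by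
  induction n generalizing T with
  | zero =>
    simp only [tails, Finset.mem_singleton, List.length_eq_zero_iff, iff_self_and]
    rintro rfl
    exact ⟨fun i hi => absurd hi (Nat.not_lt_zero i), List.nodup_nil⟩
  | succ n ih =>
    simp only [tails, Finset.mem_image, Finset.mem_sigma, Finset.mem_sdiff, List.mem_toFinset, ih]
    constructor
    · rintro ⟨⟨S, p⟩, ⟨⟨hS, hSt⟩, hp, hpS⟩, rfl⟩
      exact ⟨by simp [hS], isTail_append_singleton_iff.mpr ⟨hSt, hS ▸ hp, hpS⟩⟩
    · rintro ⟨hT, hTt⟩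
      have hne : T ≠ [] := by rintro rfl; simp at hT
      rw [← List.dropLast_append_getLast hne] at hTt ⊢
      have hlen : T.dropLast.length = n := by simp [hT]
      obtain ⟨hSt, hp, hpS⟩ := isTail_append_singleton_iff.mp hTt
      exact ⟨⟨_, _⟩, ⟨⟨hlen, hSt⟩, hlen ▸ hp, hpS⟩, rfl⟩

theorem card_letters_sdiff {n : ℕ} {T : List (ℕ × ℕ)} (hT : T ∈ tails n) :
    (letters (n + 1) \ T.toFinset).card = 2 * n + 3 := by
  obtain ⟨hlen, hpos, hnd⟩ := mem_tails.mp hT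
  have hsub : T.toFinset ⊆ letters (n + 1) := by
    intro p hp
    obtain ⟨i, hi, rfl⟩ := List.getElem_of_mem (List.mem_toFinset.mp hp)
    rw [← List.getD_eq_getElem _ (0, 0)]
    exact letters_mono (by omega) (hpos i hi)
  rw [Finset.card_sdiff_of_subset hsub, card_letters, List.toFinset_card_of_nodup hnd, hlen]
  omega

theorem card_tails (n : ℕ) : (tails n).card = Nat.doubleFactorial (2 * n + 1) := by
  induction n with
  | zero => rfl
  | succ n ih =>
    rw [tails, Finset.card_image_sigma_append_singleton,
      Finset.sum_const_nat fun _ => card_letters_sdiff, ih,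
      show 2 * (n + 1) + 1 = 2 * n + 1 + 2 by omega, Nat.doubleFactorial_add_two, mul_comm]

theorem setOf_isSPCode_succ (n : ℕ) :
    {L | IsSPCode (n + 1) L} = List.cons (0, 0) '' ↑(tails n) := by
  ext L
  simp only [Set.mem_ofPred_eq, isSPCode_succ_iff, Set.mem_image, Finset.mem_coe, mem_tails,
    and_assoc]

end SPCode

theorem spcode_count_general (n : ℕ) :
    Set.ncard {L : List (ℕ × ℕ) | IsSPCode n L} = Nat.doubleFactorial (2 * n - 1) := by
  cases n with
  | zero => simp [SPCode.isSPCode_zero_iff]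
  | succ n =>
    rw [SPCode.setOf_isSPCode_succ, Set.ncard_image_of_injective _ (List.cons_injective),
      Set.ncard_coe_finset, SPCode.card_tails, show 2 * (n + 1) - 1 = 2 * n + 1 by omega]

theorem spcode_count (n : ℕ) (hn : 1 ≤ n) :
    Set.ncard {L : List (ℕ × ℕ) | IsSPCode n L} = Nat.doubleFactorial (2 * n - 1) :=
  spcode_count_general n
end
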